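/- arXiv:math/0403433 — 7 statements merged into one kernel-verified Lean document; each statement's English description precedes it below -/
import Mathlib

section
/- For each n ≥ 7 and admissible k, the map i ↦ i+1 (mod n) and the map i ↦ n-i (mod n) are automorphisms of T_{n,1,k}, generating a subgroup isomorphic to the dihedral group D_n of order 2n that acts transitively on the set of faces of T_{n,1,k}. -/
/-- The faces of the triangulation `T_{n,1,k}` of the torus. -/
def Tfaces (n k : ℕ) : Set (Finset (ZMod n)) :=
  {F | ∃ i : ZMod n,
    F = ({i, i + (k : ZMod n), i + (k : ZMod n) + 1} : Finset (ZMod n)) ∨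
    F = ({i, i + 1, i + (k : ZMod n) + 1} : Finset (ZMod n))}

/-- A permutation of the vertices is an automorphism of `T_{n,1,k}` when it preserves
the set of faces. -/
def IsAuto (n k : ℕ) (f : Equiv.Perm (ZMod n)) : Prop :=
  ∀ F : Finset (ZMod n), F ∈ Tfaces n k ↔ F.image f ∈ Tfaces n k

/-! The two generators are the images of `r 1` and `sr 0` under the action of `DihedralGroup n`
on `ZMod n` by `r i : x ↦ x + i`, `sr i : x ↦ -x - i`; this action is faithful once `2 < n`, so
the subgroup they generate is a copy of `D_n`. Rotations permute each of the two families of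
faces, and a reflection reverses `{i, i + 1, i + k + 1}` onto a face of the form
`{j, j + k, j + k + 1}`, so every face can be moved to `{0, k, k + 1}`. -/

open Equiv Finset

section Triples

variable {α : Type*} [DecidableEq α]

lemma Finset.triple_congr {a b c a' b' c' : α} (ha : a = a') (hb : b = b') (hc : c = c') :
    ({a, b, c} : Finset α) = {a', b', c'} := by
  rw [ha, hb, hc]

lemma Finset.triple_rev (a b c : α) : ({a, b, c} : Finset α) = {c, b, a} := by
  ext x; simp only [mem_insert, mem_singleton]; tauto

end Triples

lemma exists_image_eq_of_forall_image_eq {α : Type*} [DecidableEq α] {H : Subgroup (Perm α)}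
    {S : Set (Finset α)} {B : Finset α} (h : ∀ F ∈ S, ∃ σ ∈ H, F.image σ = B) :
    ∀ F ∈ S, ∀ G ∈ S, ∃ σ ∈ H, F.image σ = G := by
  intro F hF G hG
  obtain ⟨σ, hσ, hσF⟩ := h F hF
  obtain ⟨τ, hτ, hτG⟩ := h G hG
  refine ⟨τ⁻¹ * σ, mul_mem (inv_mem hτ) hσ, ?_⟩
  rw [Perm.coe_mul, ← image_image, hσF, ← hτG, image_image, Perm.inv_def, symm_comp_self,
    image_id]

namespace DihedralGroup

variable {n : ℕ}

def toPermZMod (n : ℕ) : DihedralGroup n →* Perm (ZMod n) where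
  toFun
    | r i => Equiv.addRight i
    | sr i => Equiv.addRight (-i) * Equiv.neg (ZMod n)
  map_one' := by
    ext x; simp [one_def, -r_zero]
  map_mul' := by
    rintro (i | i) (j | j) <;> ext x <;>
      simp only [r_mul_r, r_mul_sr, sr_mul_r, sr_mul_sr, Perm.mul_apply, coe_addRight,
        Equiv.neg_apply] <;> ring

@[simp] lemma toPermZMod_r (i : ZMod n) : toPermZMod n (r i) = Equiv.addRight i := rfl

@[simp] lemma toPermZMod_sr (i : ZMod n) :
    toPermZMod n (sr i) = Equiv.addRight (-i) * Equiv.neg (ZMod n) := rfl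

lemma toPermZMod_injective (hn : 2 < n) : Function.Injective (toPermZMod n) := by
  have : Fact (2 < n) := ⟨hn⟩
  rw [injective_iff_map_eq_one]
  rintro (i | i) h
  · have h0 := congr($h 0)
    simp only [toPermZMod_r, coe_addRight, zero_add, Perm.coe_one, id_eq] at h0
    rw [h0, r_zero]
  · have h0 := congr($h 0)
    have h1 := congr($h 1)
    simp only [toPermZMod_sr, Perm.mul_apply, Equiv.neg_apply, coe_addRight, Perm.coe_one,
      id_eq] at h0 h1
    rw [neg_zero, zero_add, neg_eq_zero] at h0
    rw [h0, neg_zero, add_zero] at h1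
    exact absurd h1 ZMod.neg_one_ne_one

lemma closure_r_one_sr_zero :
    Subgroup.closure {r 1, sr 0} = (⊤ : Subgroup (DihedralGroup n)) := by
  have r_mem (i : ZMod n) : r i ∈ Subgroup.closure {r 1, sr 0} := by
    rw [← ZMod.intCast_zmod_cast i, ← r_one_zpow]
    exact zpow_mem (Subgroup.subset_closure (by simp)) _
  refine eq_top_iff.mpr fun g _ => ?_
  rcases g with i | i
  · exact r_mem i
  · rw [← zero_add i, ← sr_mul_r]
    exact mul_mem (Subgroup.subset_closure (by simp)) (r_mem i)

lemma range_toPermZMod :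
    (toPermZMod n).range =
      Subgroup.closure {Equiv.addRight (1 : ZMod n), Equiv.neg (ZMod n)} := by
  rw [MonoidHom.range_eq_map, ← closure_r_one_sr_zero, MonoidHom.map_closure,
    Set.image_insert_eq, Set.image_singleton, toPermZMod_r, toPermZMod_sr, neg_zero,
    Equiv.addRight_zero, one_mul]

end DihedralGroup

open DihedralGroup

variable {n k : ℕ}

lemma image_toPermZMod_mem_Tfaces (g : DihedralGroup n) {F : Finset (ZMod n)}
    (hF : F ∈ Tfaces n k) : F.image (toPermZMod n g) ∈ Tfaces n k := by
  rcases g with i | i <;> obtain ⟨j, rfl | rfl⟩ := hF <;>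
    simp only [image_insert, image_singleton, toPermZMod_r, toPermZMod_sr, Perm.mul_apply,
      Equiv.neg_apply, coe_addRight]
  · exact ⟨j + i, Or.inl (triple_congr (by ring) (by ring) (by ring))⟩
  · exact ⟨j + i, Or.inr (triple_congr (by ring) (by ring) (by ring))⟩
  · refine ⟨-j - i - k - 1, Or.inr ?_⟩
    rw [triple_rev]
    exact triple_congr (by ring) (by ring) (by ring)
  · refine ⟨-j - i - k - 1, Or.inl ?_⟩
    rw [triple_rev]
    exact triple_congr (by ring) (by ring) (by ring)

lemma isAuto_toPermZMod (g : DihedralGroup n) : IsAuto n k (toPermZMod n g) := by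
  refine fun F => ⟨image_toPermZMod_mem_Tfaces g, fun hF => ?_⟩
  have hF' := image_toPermZMod_mem_Tfaces g⁻¹ hF
  rwa [image_image, ← Perm.coe_mul, ← map_mul, inv_mul_cancel, map_one, Perm.coe_one,
    image_id] at hF'

lemma exists_mem_range_toPermZMod_image_eq_base {F : Finset (ZMod n)} (hF : F ∈ Tfaces n k) :
    ∃ σ ∈ (toPermZMod n).range, F.image σ = {0, (k : ZMod n), (k : ZMod n) + 1} := by
  obtain ⟨i, rfl | rfl⟩ := hF
  · refine ⟨_, ⟨r (-i), rfl⟩, ?_⟩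
    simp only [image_insert, image_singleton, toPermZMod_r, coe_addRight]
    exact triple_congr (by ring) (by ring) (by ring)
  · refine ⟨_, ⟨sr (-i - k - 1), rfl⟩, ?_⟩
    simp only [image_insert, image_singleton, toPermZMod_sr, Perm.mul_apply, Equiv.neg_apply,
      coe_addRight]
    rw [triple_rev]
    exact triple_congr (by ring) (by ring) (by ring)

theorem dihedral_acts_face_transitively_general (n k : ℕ) (hn : 7 ≤ n) :
    IsAuto n k (Equiv.addRight (1 : ZMod n)) ∧
    IsAuto n k (Equiv.neg (ZMod n)) ∧
    Nonempty
      ((Subgroup.closure ({Equiv.addRight (1 : ZMod n), Equiv.neg (ZMod n)} :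
          Set (Equiv.Perm (ZMod n)))) ≃* DihedralGroup n) ∧
    ∀ F ∈ Tfaces n k, ∀ G ∈ Tfaces n k,
      ∃ σ ∈ Subgroup.closure ({Equiv.addRight (1 : ZMod n), Equiv.neg (ZMod n)} :
          Set (Equiv.Perm (ZMod n))), F.image σ = G := by
  rw [← range_toPermZMod]
  refine ⟨isAuto_toPermZMod (r 1), ?_,
    ⟨(MonoidHom.ofInjective (toPermZMod_injective (by omega))).symm⟩, ?_⟩
  · simpa using isAuto_toPermZMod (k := k) (sr (0 : ZMod n))
  · exact exists_image_eq_of_forall_image_eq fun _ => exists_mem_range_toPermZMod_image_eq_base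

/-- For `n ≥ 7` and admissible `k`, the maps `i ↦ i+1` and `i ↦ -i` are automorphisms
of `T_{n,1,k}` generating a subgroup isomorphic to the dihedral group of order `2n`
which acts transitively on the faces. -/
theorem dihedral_acts_face_transitively (n k : ℕ) (hn : 7 ≤ n) (hk1 : 2 ≤ k)
    (hk2 : k ≤ n - 3) :
    IsAuto n k (Equiv.addRight (1 : ZMod n)) ∧
    IsAuto n k (Equiv.neg (ZMod n)) ∧
    Nonempty
      ((Subgroup.closure ({Equiv.addRight (1 : ZMod n), Equiv.neg (ZMod n)} :
          Set (Equiv.Perm (ZMod n)))) ≃* DihedralGroup n) ∧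
    ∀ F ∈ Tfaces n k, ∀ G ∈ Tfaces n k,
      ∃ σ ∈ Subgroup.closure ({Equiv.addRight (1 : ZMod n), Equiv.neg (ZMod n)} :
          Set (Equiv.Perm (ZMod n))), F.image σ = G :=
  dihedral_acts_face_transitively_general n k hn
end

section
/- The map i ↦ 4i (mod 13) defines a simplicial isomorphism from T_{13,1,2} to T_{13,1,4}, and the map i ↦ 7i (mod 13) defines a simplicial isomorphism from T_{13,1,2} to T_{13,1,5}. -/
lemma Tfaces_iso (u v : ZMod 13) (k l : ℕ)
    (huv : ∀ x : ZMod 13, v * (u * x) = x)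
    (hfwd : ∀ i : ZMod 13,
      (({i, i + (k : ZMod 13), i + (k : ZMod 13) + 1} : Finset (ZMod 13)).image
          (fun x => u * x) ∈ Tfaces 13 l) ∧
      (({i, i + 1, i + (k : ZMod 13) + 1} : Finset (ZMod 13)).image
          (fun x => u * x) ∈ Tfaces 13 l))
    (hbwd : ∀ j : ZMod 13,
      (({j, j + (l : ZMod 13), j + (l : ZMod 13) + 1} : Finset (ZMod 13)).image
          (fun x => v * x) ∈ Tfaces 13 k) ∧
      (({j, j + 1, j + (l : ZMod 13) + 1} : Finset (ZMod 13)).image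
          (fun x => v * x) ∈ Tfaces 13 k)) :
    ∀ F : Finset (ZMod 13), F ∈ Tfaces 13 k ↔ F.image (fun x => u * x) ∈ Tfaces 13 l := by
  intro F
  constructor
  · rintro ⟨i, rfl | rfl⟩
    · exact (hfwd i).1
    · exact (hfwd i).2
  · intro hG
    have hF : (F.image (fun x => u * x)).image (fun x => v * x) = F := by
      rw [Finset.image_image]
      have : ((fun x => v * x) ∘ fun x : ZMod 13 => u * x) = id := by
        funext x; exact huv x
      rw [this, Finset.image_id]
    obtain ⟨j, h | h⟩ := hG
    · rw [← hF, h]; exact (hbwd j).1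
    · rw [← hF, h]; exact (hbwd j).2

/-- The map `i ↦ 4i (mod 13)` is a simplicial isomorphism from `T_{13,1,2}` to
`T_{13,1,4}`, and `i ↦ 7i (mod 13)` is a simplicial isomorphism from `T_{13,1,2}`
to `T_{13,1,5}`. -/
theorem T13_isos :
    (Function.Bijective (fun i : ZMod 13 => 4 * i) ∧
      ∀ F : Finset (ZMod 13),
        F ∈ Tfaces 13 2 ↔ F.image (fun i : ZMod 13 => 4 * i) ∈ Tfaces 13 4) ∧
    (Function.Bijective (fun i : ZMod 13 => 7 * i) ∧
      ∀ F : Finset (ZMod 13),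
        F ∈ Tfaces 13 2 ↔ F.image (fun i : ZMod 13 => 7 * i) ∈ Tfaces 13 5) := by
  constructor
  · exact ⟨by decide, Tfaces_iso 4 10 2 4 (by decide)
      (by intro i; simp only [Tfaces, Set.mem_setOf_eq]; revert i; decide)
      (by intro j; simp only [Tfaces, Set.mem_setOf_eq]; revert j; decide)⟩
  · exact ⟨by decide, Tfaces_iso 7 2 2 5 (by decide)
      (by intro i; simp only [Tfaces, Set.mem_setOf_eq]; revert i; decide)
      (by intro j; simp only [Tfaces, Set.mem_setOf_eq]; revert j; decide)⟩
end

section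
/- For m ≥ 3, if n divides m^2 - 1 appropriately (m^2 ≡ 1 mod n), then the maps μ(i) = m·i and ν(i) = (n-m)·i on Z/n are two distinct automorphisms of order 2 of T_{n,1,k} for each k ∈ {m-1, m}. -/
private lemma tswap12 {α} [DecidableEq α] (a b c : α) :
    ({a, b, c} : Finset α) = {b, a, c} := by ext x; simp; tauto

private lemma tswap23 {α} [DecidableEq α] (a b c : α) :
    ({a, b, c} : Finset α) = {a, c, b} := by ext x; simp; tauto

private lemma trot {α} [DecidableEq α] (a b c : α) :
    ({a, b, c} : Finset α) = {c, a, b} := by ext x; simp; tauto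

private lemma trot' {α} [DecidableEq α] (a b c : α) :
    ({a, b, c} : Finset α) = {b, c, a} := by ext x; simp; tauto

private lemma trev {α} [DecidableEq α] (a b c : α) :
    ({a, b, c} : Finset α) = {c, b, a} := by ext x; simp; tauto

private lemma triple_eq {α} [DecidableEq α] {a b c a' b' c' : α}
    (h1 : a = a') (h2 : b = b') (h3 : c = c') :
    ({a, b, c} : Finset α) = {a', b', c'} := by rw [h1, h2, h3]

/-- If `m² ≡ 1 (mod n)` (with `m ≢ ±1`), then `μ(i) = m·i` and `ν(i) = (n-m)·i`
are two distinct automorphisms of order 2 of `T_{n,1,k}` for each `k ∈ {m-1, m}`. -/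
theorem mul_involutions (n m : ℕ) (hm : 3 ≤ m) (hmn : m < n)
    (hsq : ((m : ZMod n)) ^ 2 = 1) (hne1 : (m : ZMod n) ≠ 1) (hne2 : (m : ZMod n) ≠ -1)
    (k : ℕ) (hk : k = m - 1 ∨ k = m) :
    let μ : ZMod n → ZMod n := fun i => (m : ZMod n) * i
    let ν : ZMod n → ZMod n := fun i => ((n - m : ℕ) : ZMod n) * i
    μ ≠ ν ∧ μ ≠ id ∧ ν ≠ id ∧ μ ∘ μ = id ∧ ν ∘ ν = id ∧
    (∀ F : Finset (ZMod n), F ∈ Tfaces n k ↔ F.image μ ∈ Tfaces n k) ∧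
    (∀ F : Finset (ZMod n), F ∈ Tfaces n k ↔ F.image ν ∈ Tfaces n k) := by
  intro μ ν
  haveI : NeZero n := ⟨by omega⟩
  have hcc : (m : ZMod n) * (m : ZMod n) = 1 := by rw [← sq]; exact hsq
  have hν : ((n - m : ℕ) : ZMod n) = -(m : ZMod n) := by
    rw [Nat.cast_sub hmn.le, ZMod.natCast_self, zero_sub]
  have h2 : (2 : ZMod n) ≠ 0 := by
    intro h
    have h' : ((2 : ℕ) : ZMod n) = 0 := by exact_mod_cast h
    rw [ZMod.natCast_eq_zero_iff] at h'
    have := Nat.le_of_dvd (by norm_num) h'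
    omega
  have hk' : (k : ZMod n) = (m : ZMod n) - 1 ∨ (k : ZMod n) = (m : ZMod n) := by
    rcases hk with h | h
    · left; subst h; rw [Nat.cast_sub (by omega : 1 ≤ m)]; simp
    · right; subst h; rfl
  have hμν : μ ≠ ν := by
    intro h
    have h1 : (m : ZMod n) * 1 = ((n - m : ℕ) : ZMod n) * 1 := congrFun h 1
    rw [hν] at h1
    have ht : (2 : ZMod n) * (m : ZMod n) = 0 := by linear_combination h1
    have : (2 : ZMod n) = 0 := by
      have := congrArg (· * (m : ZMod n)) ht
      simpa [mul_assoc, hcc] using this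
    exact h2 this
  have hμid : μ ≠ id := by
    intro h
    have h1 : (m : ZMod n) * 1 = 1 := congrFun h 1
    exact hne1 (by simpa using h1)
  have hνid : ν ≠ id := by
    intro h
    have h1 : ((n - m : ℕ) : ZMod n) * 1 = 1 := congrFun h 1
    rw [hν] at h1
    exact hne2 (by linear_combination -h1)
  have hμ2 : μ ∘ μ = id := by
    funext i
    show (m : ZMod n) * ((m : ZMod n) * i) = i
    rw [← mul_assoc, hcc, one_mul]
  have hν2 : ν ∘ ν = id := by
    funext i
    show ((n - m : ℕ) : ZMod n) * (((n - m : ℕ) : ZMod n) * i) = i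
    rw [hν, ← mul_assoc, neg_mul_neg, hcc, one_mul]
  have gen : ∀ f : ZMod n → ZMod n, f ∘ f = id →
      (∀ F ∈ Tfaces n k, F.image f ∈ Tfaces n k) →
      ∀ F : Finset (ZMod n), F ∈ Tfaces n k ↔ F.image f ∈ Tfaces n k := by
    intro f hf hfwd F
    refine ⟨hfwd F, fun h => ?_⟩
    have := hfwd _ h
    rwa [Finset.image_image, hf, Finset.image_id] at this
  have fwdμ : ∀ F ∈ Tfaces n k, F.image μ ∈ Tfaces n k := by
    rintro F ⟨i, rfl | rfl⟩ <;> rcases hk' with hkk | hkk <;>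
      simp only [Tfaces, Set.mem_setOf_eq, Finset.image_insert,
        Finset.image_singleton, μ, hkk]
    · -- A-type, k = c - 1
      refine ⟨(m : ZMod n) * i + 1 - (m : ZMod n), Or.inl ((tswap12 _ _ _).trans (triple_eq ?_ ?_ ?_))⟩ <;>
        first | ring1 | linear_combination hcc | linear_combination -hcc
    · -- A-type, k = c
      refine ⟨(m : ZMod n) * i, Or.inr (triple_eq ?_ ?_ ?_)⟩ <;>
        first | ring1 | linear_combination hcc | linear_combination -hcc
    · -- B-type, k = c - 1
      refine ⟨(m : ZMod n) * i, Or.inr ((tswap23 _ _ _).trans (triple_eq ?_ ?_ ?_))⟩ <;>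
        first | ring1 | linear_combination hcc | linear_combination -hcc
    · -- B-type, k = c
      refine ⟨(m : ZMod n) * i, Or.inl (triple_eq ?_ ?_ ?_)⟩ <;>
        first | ring1 | linear_combination hcc | linear_combination -hcc
  have fwdν : ∀ F ∈ Tfaces n k, F.image ν ∈ Tfaces n k := by
    rintro F ⟨i, rfl | rfl⟩ <;> rcases hk' with hkk | hkk <;>
      simp only [Tfaces, Set.mem_setOf_eq, Finset.image_insert,
        Finset.image_singleton, ν, hν, hkk]
    · -- A-type, k = c - 1
      refine ⟨-((m : ZMod n) * i) - 1, Or.inr ((trot _ _ _).trans (triple_eq ?_ ?_ ?_))⟩ <;>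
        first | ring1 | linear_combination hcc | linear_combination -hcc
    · -- A-type, k = c
      refine ⟨-((m : ZMod n) * i) - 1 - (m : ZMod n), Or.inl ((trev _ _ _).trans (triple_eq ?_ ?_ ?_))⟩ <;>
        first | ring1 | linear_combination hcc | linear_combination -hcc
    · -- B-type, k = c - 1
      refine ⟨-((m : ZMod n) * i) - (m : ZMod n), Or.inl ((trot' _ _ _).trans (triple_eq ?_ ?_ ?_))⟩ <;>
        first | ring1 | linear_combination hcc | linear_combination -hcc
    · -- B-type, k = c
      refine ⟨-((m : ZMod n) * i) - (m : ZMod n) - 1, Or.inr ((trev _ _ _).trans (triple_eq ?_ ?_ ?_))⟩ <;>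
        first | ring1 | linear_combination hcc | linear_combination -hcc
  exact ⟨hμν, hμid, hνid, hμ2, hν2, gen μ hμ2 fwdμ, gen ν hν2 fwdν⟩
end

section
/- For m ≥ 3, the map σ(i) = m·i on Z/(m^2-m+1) is an automorphism of order 6 of T_{m^2-m+1, 1, m-1}, and with ρ(i) = i+1 one has σ^{-1} ρ σ = ρ^m; in particular 6 is the smallest positive integer t with m^t ≡ 1 (mod m^2 - m + 1). -/
/-- For `m ≥ 3`, the map `σ(i) = m·i` on `ℤ/(m²-m+1)` is an automorphism of order 6
of `T_{m²-m+1, 1, m-1}`, conjugation by it sends `ρ : i ↦ i+1` to `ρ^m`, and 6 is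
the least positive `t` with `m^t ≡ 1 (mod m²-m+1)`. -/
theorem sigma_order_six (m : ℕ) (hm : 3 ≤ m) :
    ∃ σ : Equiv.Perm (ZMod (m ^ 2 - m + 1)),
      (∀ i : ZMod (m ^ 2 - m + 1), σ i = (m : ZMod (m ^ 2 - m + 1)) * i) ∧
      orderOf σ = 6 ∧
      (∀ F : Finset (ZMod (m ^ 2 - m + 1)),
        F ∈ Tfaces (m ^ 2 - m + 1) (m - 1) ↔
          F.image σ ∈ Tfaces (m ^ 2 - m + 1) (m - 1)) ∧
      σ * Equiv.addRight (1 : ZMod (m ^ 2 - m + 1)) * σ⁻¹ =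
        (Equiv.addRight (1 : ZMod (m ^ 2 - m + 1))) ^ m ∧
      (m : ZMod (m ^ 2 - m + 1)) ^ 6 = 1 ∧
      (∀ t : ℕ, 0 < t → t < 6 → (m : ZMod (m ^ 2 - m + 1)) ^ t ≠ 1) := by
  set n : ℕ := m ^ 2 - m + 1 with hn
  have hsq : 3 * m ≤ m ^ 2 := by nlinarith
  have hmle : m ≤ m ^ 2 := by nlinarith
  have h7 : 7 ≤ n := by omega
  haveI : NeZero n := ⟨by omega⟩
  haveI : Fact (1 < n) := ⟨by omega⟩
  set mu : ZMod n := (m : ZMod n) with hmu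
  -- key algebraic identities
  have h2 : mu * mu = mu - 1 := by
    have hnat : (m ^ 2 : ℕ) = n + (m - 1) := by omega
    have : ((m ^ 2 : ℕ) : ZMod n) = ((n + (m - 1) : ℕ) : ZMod n) := by rw [hnat]
    rw [Nat.cast_add, Nat.cast_sub (by omega), ZMod.natCast_self] at this
    push_cast at this
    linear_combination this
  have h3 : mu ^ 3 = -1 := by linear_combination (mu + 1) * h2
  have h6 : mu ^ 6 = 1 := by linear_combination (mu ^ 3 - 1) * h3
  have h5 : mu ^ 5 = 1 - mu := by linear_combination mu ^ 2 * h3 - h2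
  have hk : ((m - 1 : ℕ) : ZMod n) = mu - 1 := by
    rw [Nat.cast_sub (by omega)]; push_cast; rfl
  -- cast ≠ 1 helper
  have hne : ∀ a : ℕ, a < n → a ≠ 1 → (a : ZMod n) ≠ 1 := by
    intro a ha ha1 h
    have := congrArg ZMod.val h
    rw [ZMod.val_cast_of_lt ha, ZMod.val_one] at this
    exact ha1 this
  -- powers of mu are casts of small naturals
  have hpows : ∀ t : ℕ, 0 < t → t < 6 → mu ^ t ≠ 1 := by
    have e1 : mu ^ 1 = ((m : ℕ) : ZMod n) := by rw [pow_one]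
    have e2 : mu ^ 2 = ((m - 1 : ℕ) : ZMod n) := by rw [hk]; linear_combination h2
    have e3 : mu ^ 3 = ((n - 1 : ℕ) : ZMod n) := by
      rw [Nat.cast_sub (by omega), ZMod.natCast_self]; push_cast; linear_combination h3
    have e4 : mu ^ 4 = ((n - m : ℕ) : ZMod n) := by
      rw [Nat.cast_sub (by omega), ZMod.natCast_self]
      have : mu ^ 4 = -mu := by linear_combination mu * h3
      rw [this]; ring
    have e5 : mu ^ 5 = ((n - m + 1 : ℕ) : ZMod n) := by
      rw [Nat.cast_add, Nat.cast_sub (by omega), ZMod.natCast_self, h5]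
      push_cast; ring
    intro t ht ht6
    interval_cases t
    · rw [e1]; exact hne m (by omega) (by omega)
    · rw [e2]; exact hne (m - 1) (by omega) (by omega)
    · rw [e3]; exact hne (n - 1) (by omega) (by omega)
    · rw [e4]; exact hne (n - m) (by omega) (by omega)
    · rw [e5]; exact hne (n - m + 1) (by omega) (by omega)
  -- the permutation
  let σ : Equiv.Perm (ZMod n) :=
    { toFun := fun x => mu * x, invFun := fun x => mu ^ 5 * x,
      left_inv := fun x => by
        show mu ^ 5 * (mu * x) = x
        rw [← mul_assoc, show mu ^ 5 * mu = mu ^ 6 by ring, h6, one_mul],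
      right_inv := fun x => by
        show mu * (mu ^ 5 * x) = x
        rw [← mul_assoc, show mu * mu ^ 5 = mu ^ 6 by ring, h6, one_mul] }
  have hσ : ∀ x : ZMod n, σ x = mu * x := fun _ => rfl
  have hσi : ∀ x : ZMod n, σ⁻¹ x = mu ^ 5 * x := fun _ => rfl
  have hσs : ∀ x : ZMod n, σ.symm x = mu ^ 5 * x := fun _ => rfl
  have haddr : ∀ x : ZMod n, (Equiv.addRight (1 : ZMod n)) x = x + 1 := fun _ => rfl
  refine ⟨σ, hσ, ?_, ?_, ?_, ?_, ?_⟩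
  · -- order 6
    have hpow : ∀ (t : ℕ) (x : ZMod n), (σ ^ t) x = mu ^ t * x := by
      intro t
      induction t with
      | zero => intro x; simp
      | succ s ih =>
        intro x
        rw [pow_succ, Equiv.Perm.mul_apply, hσ, ih, pow_succ]
        ring
    rw [orderOf_eq_iff (by norm_num)]
    constructor
    · ext x
      rw [hpow, h6, one_mul]; rfl
    · intro t ht6 ht h
      have := Equiv.ext_iff.mp h 1
      rw [hpow] at this
      simp only [mul_one, Equiv.Perm.one_apply] at this
      exact hpows t ht ht6 this
  · -- faces
    have himg : ∀ (f : Equiv.Perm (ZMod n)) (a b c : ZMod n),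
        ({a, b, c} : Finset (ZMod n)).image f = {f a, f b, f c} := by
      intro f a b c; simp [Finset.image_insert]
    intro F
    simp only [Tfaces, Set.mem_setOf_eq, hk]
    constructor
    · rintro ⟨i, hA | hB⟩
      · refine ⟨mu * i - 1, Or.inr ?_⟩
        rw [hA, himg]
        have e1 : σ i = (mu * i - 1) + 1 := by rw [hσ]; ring
        have e2 : σ (i + (mu - 1)) = mu * i - 1 := by rw [hσ]; linear_combination h2
        have e3 : σ (i + (mu - 1) + 1) = (mu * i - 1) + (mu - 1) + 1 := by
          rw [hσ]; linear_combination h2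
        rw [e1, e2, e3]
        exact Finset.insert_comm _ _ _
      · refine ⟨mu * i, Or.inl ?_⟩
        rw [hB, himg]
        have e1 : σ i = mu * i := hσ i
        have e2 : σ (i + 1) = mu * i + (mu - 1) + 1 := by rw [hσ]; ring
        have e3 : σ (i + (mu - 1) + 1) = mu * i + (mu - 1) := by
          rw [hσ]; linear_combination h2
        rw [e1, e2, e3]
        exact congrArg (insert (mu * i)) (Finset.pair_comm _ _)
    · intro hIm
      have hFeq : F = (F.image σ).image σ.symm := by
        rw [Finset.image_image]
        simp
      obtain ⟨i, hA | hB⟩ := hIm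
      · refine ⟨mu ^ 5 * i, Or.inr ?_⟩
        rw [hFeq, hA, himg]
        have e1 : σ.symm i = mu ^ 5 * i := hσs i
        have e2 : σ.symm (i + (mu - 1)) = mu ^ 5 * i + (mu - 1) + 1 := by
          rw [hσs]; linear_combination (mu - 1) * h5 - h2
        have e3 : σ.symm (i + (mu - 1) + 1) = mu ^ 5 * i + 1 := by
          rw [hσs]; linear_combination mu * h5 - h2
        rw [e1, e2, e3]
        exact congrArg (insert (mu ^ 5 * i)) (Finset.pair_comm _ _)
      · refine ⟨mu ^ 5 * i + 1 - mu, Or.inl ?_⟩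
        rw [hFeq, hB, himg]
        have e1 : σ.symm i = (mu ^ 5 * i + 1 - mu) + (mu - 1) := by
          rw [hσs]; ring
        have e2 : σ.symm (i + 1) = mu ^ 5 * i + 1 - mu := by
          rw [hσs]; linear_combination h5
        have e3 : σ.symm (i + (mu - 1) + 1) = (mu ^ 5 * i + 1 - mu) + (mu - 1) + 1 := by
          rw [hσs]; linear_combination h6
        rw [e1, e2, e3]
        exact Finset.insert_comm _ _ _
  · -- conjugation
    have hρ : ∀ (t : ℕ) (x : ZMod n),
        ((Equiv.addRight (1 : ZMod n)) ^ t) x = x + t := by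
      intro t
      induction t with
      | zero => intro x; simp
      | succ s ih =>
        intro x
        rw [pow_succ, Equiv.Perm.mul_apply, haddr, ih]
        push_cast; ring
    ext x
    rw [Equiv.Perm.mul_apply, Equiv.Perm.mul_apply, hρ, hσi, haddr, hσ, ← hmu]
    linear_combination x * h6
  · exact h6
  · exact hpows
end

section
/- Let M be a connected combinatorial 2-manifold in which every vertex has degree 6, and let U be a set of m vertices with m < f_0(M). Then the number of edges of M with both endpoints in U is at most 3m - 3. -/
open scoped Classical
noncomputable section

/-- A finite 2-dimensional simplicial complex given by its triangular faces. -/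
structure SComplex (V : Type) [DecidableEq V] [Fintype V] where
  faces : Finset (Finset V)
  card_eq : ∀ F ∈ faces, F.card = 3

namespace SComplex

variable {V : Type} [DecidableEq V] [Fintype V]

/-- The edges: the 2-element subsets of faces. -/
def edges (K : SComplex V) : Finset (Finset V) :=
  (Finset.univ : Finset (Finset V)).filter fun e => e.card = 2 ∧ ∃ F ∈ K.faces, e ⊆ F

/-- The degree of a vertex: the number of edges containing it. -/
def degree (K : SComplex V) (v : V) : ℕ := (K.edges.filter fun e => v ∈ e).card

/-- `K` triangulates a closed surface: every vertex lies in a face, every edge lies in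
exactly two faces, and the link of every vertex is a single cycle (encoded by
2-regularity, which follows from the edge condition, together with connectedness of
the link graph). -/
def IsClosedSurface (K : SComplex V) : Prop :=
  (∀ v : V, ∃ F ∈ K.faces, v ∈ F) ∧
  (∀ e ∈ K.edges, (K.faces.filter fun F => e ⊆ F).card = 2) ∧
  (∀ v a b : V, ({v, a} : Finset V) ∈ K.edges → ({v, b} : Finset V) ∈ K.edges →
    Relation.ReflTransGen (fun x y => ({v, x, y} : Finset V) ∈ K.faces) a b)

/-- Connectedness of the complex. -/
def Connected (K : SComplex V) : Prop :=
  ∀ u v : V, Relation.ReflTransGen (fun a b => ({a, b} : Finset V) ∈ K.edges) u v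

/-- The Euler characteristic `f₀ - f₁ + f₂`. -/
def euler (K : SComplex V) : ℤ :=
  (Fintype.card V : ℤ) - (K.edges.card : ℤ) + (K.faces.card : ℤ)

end SComplex

namespace EdgeProofAux

open Finset

variable {V : Type} [DecidableEq V] [Fintype V]

lemma mem_edges_iff (K : SComplex V) {e : Finset V} :
    e ∈ K.edges ↔ e.card = 2 ∧ ∃ F ∈ K.faces, e ⊆ F := by
  simp [SComplex.edges]

lemma edge_card (K : SComplex V) {e : Finset V} (he : e ∈ K.edges) : e.card = 2 :=
  ((mem_edges_iff K).1 he).1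

lemma pair_mem_edges (K : SComplex V) {F : Finset V} (hF : F ∈ K.faces) {x y : V}
    (hx : x ∈ F) (hy : y ∈ F) (hxy : x ≠ y) : ({x, y} : Finset V) ∈ K.edges := by
  refine (mem_edges_iff K).2 ⟨Finset.card_pair hxy, F, hF, ?_⟩
  intro z hz
  simp only [mem_insert, mem_singleton] at hz
  rcases hz with rfl | rfl <;> assumption

/-- The set of neighbours of `v`. -/
def N (K : SComplex V) (v : V) : Finset V :=
  univ.filter fun x => ({v, x} : Finset V) ∈ K.edges

lemma mem_N (K : SComplex V) {v x : V} : x ∈ N K v ↔ ({v, x} : Finset V) ∈ K.edges := by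
  simp [N]

lemma ne_of_mem_N (K : SComplex V) {v x : V} (h : x ∈ N K v) : x ≠ v := by
  rintro rfl
  have := edge_card K ((mem_N K).1 h)
  simp at this

lemma mem_N_symm (K : SComplex V) {v x : V} (h : x ∈ N K v) : v ∈ N K x := by
  rw [mem_N] at h ⊢
  rwa [Finset.pair_comm]

lemma card_two_mem {s : Finset V} (h : s.card = 2) {v : V} (hv : v ∈ s) :
    ∃ x, x ≠ v ∧ s = {v, x} := by
  obtain ⟨a, b, hab, rfl⟩ := Finset.card_eq_two.1 h
  simp only [mem_insert, mem_singleton] at hv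
  rcases hv with rfl | rfl
  · exact ⟨b, hab.symm, rfl⟩
  · exact ⟨a, hab, Finset.pair_comm _ _⟩

lemma card_N (K : SComplex V) (hd : ∀ v : V, K.degree v = 6) (v : V) :
    (N K v).card = 6 := by
  rw [← hd v, SComplex.degree]
  apply Finset.card_bij (fun x _ => ({v, x} : Finset V))
  · intro x hx
    rw [mem_N] at hx
    simp only [mem_filter]
    exact ⟨hx, mem_insert_self v {x}⟩
  · intro a ha b hb h
    have : a ∈ ({v, b} : Finset V) := h ▸ (by simp : a ∈ ({v, a} : Finset V))
    simp only [mem_insert, mem_singleton] at this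
    rcases this with rfl | rfl
    · exact absurd rfl (ne_of_mem_N K ha)
    · rfl
  · intro e he
    simp only [mem_filter] at he
    obtain ⟨x, hxv, rfl⟩ := card_two_mem (edge_card K he.1) he.2
    exact ⟨x, (mem_N K).2 he.1, rfl⟩

lemma split_inter_sdiff (s S : Finset V) : (s ∩ S) ∪ (s \ S) = s := by
  ext z; by_cases hz : z ∈ S <;> simp [hz]

lemma pair_card_le (a b : V) : ({a, b} : Finset V).card ≤ 2 := by
  refine le_trans (Finset.card_insert_le _ _) ?_
  simp

lemma face_ne (K : SComplex V) {v x y : V} (h : ({v, x, y} : Finset V) ∈ K.faces) :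
    y ≠ v ∧ y ≠ x ∧ v ≠ x := by
  have h3 := K.card_eq _ h
  refine ⟨?_, ?_, ?_⟩ <;> rintro rfl
  · have hsub : ({y, x, y} : Finset V) ⊆ {y, x} := by intro z; simp only [Finset.mem_insert, Finset.mem_singleton]; tauto
    have := (Finset.card_le_card hsub).trans (pair_card_le y x)
    omega
  · have hsub : ({v, y, y} : Finset V) ⊆ {v, y} := by intro z; simp only [Finset.mem_insert, Finset.mem_singleton]; tauto
    have := (Finset.card_le_card hsub).trans (pair_card_le v y)
    omega
  · have hsub : ({v, v, y} : Finset V) ⊆ {v, y} := by intro z; simp only [Finset.mem_insert, Finset.mem_singleton]; tauto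
    have := (Finset.card_le_card hsub).trans (pair_card_le v y)
    omega

lemma face_mem_N (K : SComplex V) {v x y : V} (h : ({v, x, y} : Finset V) ∈ K.faces) :
    y ∈ N K v := by
  have hne := face_ne K h
  rw [mem_N]
  exact pair_mem_edges K h (by simp) (by simp) hne.1.symm

lemma face_mem_N' (K : SComplex V) {v x y : V} (h : ({v, x, y} : Finset V) ∈ K.faces) :
    x ∈ N K v := by
  have hne := face_ne K h
  rw [mem_N]
  exact pair_mem_edges K h (by simp) (by simp) hne.2.2

lemma face_mem_Nx (K : SComplex V) {v x y : V} (h : ({v, x, y} : Finset V) ∈ K.faces) :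
    y ∈ N K x := by
  have hne := face_ne K h
  rw [mem_N]
  exact pair_mem_edges K h (by simp) (by simp) hne.2.1.symm

lemma face_third (K : SComplex V) {F : Finset V} (hF : F ∈ K.faces) {v x : V}
    (hv : v ∈ F) (hx : x ∈ F) (hvx : v ≠ x) :
    ∃ y, y ∈ F ∧ y ≠ v ∧ y ≠ x ∧ F = {v, x, y} := by
  have h3 := K.card_eq F hF
  have hsub : ({v, x} : Finset V) ⊆ F := by
    intro z hz; simp only [mem_insert, mem_singleton] at hz
    rcases hz with rfl | rfl <;> assumption
  have h1 : (F \ {v, x}).card = 1 := by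
    rw [Finset.card_sdiff_of_subset hsub, h3, Finset.card_pair hvx]
  obtain ⟨y, hy⟩ := Finset.card_eq_one.1 h1
  have hyF : y ∈ F \ ({v, x} : Finset V) := hy ▸ Finset.mem_singleton_self y
  rw [Finset.mem_sdiff] at hyF
  simp only [mem_insert, mem_singleton, not_or] at hyF
  refine ⟨y, hyF.1, hyF.2.1, hyF.2.2, ?_⟩
  have hcard : ({v, x, y} : Finset V).card = 3 :=
    Finset.card_eq_three.2 ⟨v, x, y, hvx, Ne.symm hyF.2.1, Ne.symm hyF.2.2, rfl⟩
  refine (Finset.eq_of_subset_of_card_le ?_ (by omega)).symm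
  intro z hz
  simp only [mem_insert, mem_singleton] at hz
  rcases hz with rfl | rfl | rfl <;> [exact hv; exact hx; exact hyF.1]

/-- The link neighbours of `x` in the link of `v`. -/
def L (K : SComplex V) (v x : V) : Finset V :=
  univ.filter fun y => ({v, x, y} : Finset V) ∈ K.faces

lemma mem_L (K : SComplex V) {v x y : V} :
    y ∈ L K v x ↔ ({v, x, y} : Finset V) ∈ K.faces := by simp [L]

lemma card_L (K : SComplex V) (hK : K.IsClosedSurface) {v x : V}
    (he : ({v, x} : Finset V) ∈ K.edges) : (L K v x).card = 2 := by
  have hvx : v ≠ x := by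
    intro h; subst h
    have := edge_card K he
    simp at this
  rw [← hK.2.1 _ he]
  apply Finset.card_bij (fun y _ => ({v, x, y} : Finset V))
  · intro y hy
    rw [mem_L] at hy
    simp only [mem_filter]
    refine ⟨hy, ?_⟩
    intro z hz; simp only [mem_insert, mem_singleton] at hz
    rcases hz with rfl | rfl <;> simp
  · intro a ha b hb h
    rw [mem_L] at ha hb
    have hA := face_ne K ha
    have : a ∈ ({v, x, b} : Finset V) := h ▸ (by simp : a ∈ ({v, x, a} : Finset V))
    simp only [mem_insert, mem_singleton] at this
    rcases this with rfl | rfl | rfl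
    · exact absurd rfl hA.1
    · exact absurd rfl hA.2.1
    · rfl
  · intro F hF
    simp only [mem_filter] at hF
    obtain ⟨hF1, hsub⟩ := hF
    obtain ⟨y, _, _, _, hFy⟩ := face_third K hF1 (hsub (by simp)) (hsub (by simp)) hvx
    exact ⟨y, (mem_L K).2 (hFy ▸ hF1), hFy.symm⟩

lemma link_closed (K : SComplex V) (hK : K.IsClosedSurface) {v : V} {T : Finset V}
    (hTN : T ⊆ N K v)
    (hcl : ∀ x ∈ T, ∀ y, ({v, x, y} : Finset V) ∈ K.faces → y ∈ T)
    {a : V} (ha : a ∈ T) {b : V} (hb : b ∈ N K v) : b ∈ T := by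
  have h := hK.2.2 v a b ((mem_N K).1 (hTN ha)) ((mem_N K).1 hb)
  induction h with
  | refl => exact ha
  | tail h1 h2 ih => exact hcl _ (ih (face_mem_N' K h2)) _ h2

lemma exists_boundary (K : SComplex V) (hK : K.IsClosedSurface) {v : V} {T : Finset V}
    (hTN : T ⊆ N K v) (hne : T.Nonempty) {b : V} (hb : b ∈ N K v) (hbT : b ∉ T) :
    ∃ x ∈ T, ∃ y, ({v, x, y} : Finset V) ∈ K.faces ∧ y ∉ T := by
  by_contra h
  push_neg at h
  obtain ⟨a, ha⟩ := hne
  exact hbT (link_closed K hK hTN (fun x hx y hy => h x hx y hy) ha hb)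

lemma double_count_mem (S : Finset V) (T : Finset (Finset V)) :
    ∑ v ∈ S, (T.filter fun t => v ∈ t).card = ∑ t ∈ T, (t ∩ S).card := by
  simp only [Finset.card_filter]
  rw [Finset.sum_comm]
  refine Finset.sum_congr rfl fun t _ => ?_
  rw [Finset.inter_comm, ← Finset.filter_mem_eq_inter, Finset.card_filter]

lemma double_count_subset (E T : Finset (Finset V)) :
    ∑ e ∈ E, (T.filter fun t => e ⊆ t).card = ∑ t ∈ T, (E.filter fun e => e ⊆ t).card := by
  simp only [Finset.card_filter]
  exact Finset.sum_comm

/-- Double counting vertex degrees over `S`. -/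
lemma degree_count (K : SComplex V) (hd : ∀ v : V, K.degree v = 6) (S : Finset V) :
    6 * S.card = 2 * (K.edges.filter fun e => e ⊆ S).card
      + (K.edges.filter fun e => (e ∩ S).card = 1).card := by
  have h1 : ∑ v ∈ S, K.degree v = 6 * S.card := by
    rw [Finset.sum_congr rfl fun v _ => hd v, Finset.sum_const, smul_eq_mul, mul_comm]
  rw [← h1]
  simp only [SComplex.degree]
  rw [double_count_mem, Finset.card_filter, Finset.card_filter, Finset.mul_sum,
    ← Finset.sum_add_distrib]
  refine Finset.sum_congr rfl fun e he => ?_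
  have h2 : e.card = 2 := edge_card K he
  have hle : (e ∩ S).card ≤ 2 := le_trans (Finset.card_le_card inter_subset_left) h2.le
  by_cases hS : e ⊆ S
  · have : e ∩ S = e := Finset.inter_eq_left.2 hS
    rw [this]
    simp [hS, h2]
  · have hne : (e ∩ S).card ≠ 2 := by
      intro hcard
      exact hS (Finset.inter_eq_left.1
        (Finset.eq_of_subset_of_card_le inter_subset_left (by omega)))
    simp only [if_neg hS]
    split_ifs with h1' <;> omega

/-- The number of crossing edges is the sum over `S` of outside-neighbour counts. -/
lemma cross_eq_sum (K : SComplex V) (S : Finset V) :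
    (K.edges.filter fun e => (e ∩ S).card = 1).card = ∑ v ∈ S, (N K v \ S).card := by
  have hdc := double_count_mem S (K.edges.filter fun e => (e ∩ S).card = 1)
  have hrhs : ∑ e ∈ K.edges.filter fun e => (e ∩ S).card = 1, (e ∩ S).card
      = (K.edges.filter fun e => (e ∩ S).card = 1).card := by
    rw [Finset.card_eq_sum_ones]
    refine Finset.sum_congr rfl fun e he => ?_
    exact (Finset.mem_filter.1 he).2
  rw [← hrhs, ← hdc]
  refine Finset.sum_congr rfl fun v hv => ?_
  apply (Finset.card_bij (fun x _ => ({v, x} : Finset V)) ?_ ?_ ?_).symm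
  · intro x hx
    rw [Finset.mem_sdiff, mem_N] at hx
    simp only [Finset.mem_filter]
    have hxv : x ≠ v := ne_of_mem_N K (by rw [mem_N]; exact hx.1)
    have hinter : ({v, x} : Finset V) ∩ S = {v} := by
      ext z
      simp only [Finset.mem_inter, Finset.mem_insert, Finset.mem_singleton]
      constructor
      · rintro ⟨rfl | rfl, hzS⟩
        · rfl
        · exact absurd hzS hx.2
      · rintro rfl; exact ⟨Or.inl rfl, hv⟩
    exact ⟨⟨hx.1, by rw [hinter]; simp⟩, by simp⟩
  · intro a ha b hb h
    rw [Finset.mem_sdiff, mem_N] at ha hb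
    have h' : ({v, a} : Finset V) = {v, b} := h
    have : a ∈ ({v, b} : Finset V) := h' ▸ (by simp : a ∈ ({v, a} : Finset V))
    simp only [Finset.mem_insert, Finset.mem_singleton] at this
    rcases this with rfl | rfl
    · exact absurd rfl (ne_of_mem_N K (by rw [mem_N]; exact ha.1))
    · rfl
  · intro e he
    simp only [Finset.mem_filter] at he
    obtain ⟨⟨he1, he2⟩, hev⟩ := he
    obtain ⟨x, hxv, rfl⟩ := card_two_mem (edge_card K he1) hev
    have heS : ({v, x} : Finset V) ∩ S = {v} := by
      have hvmem : v ∈ ({v, x} : Finset V) ∩ S := by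
        simp only [Finset.mem_inter]; exact ⟨by simp, hv⟩
      obtain ⟨a, ha⟩ := Finset.card_eq_one.1 he2
      rw [ha] at hvmem ⊢
      simp only [Finset.mem_singleton] at hvmem
      rw [hvmem]
    have hxS : x ∉ S := by
      intro hxSmem
      have : x ∈ ({v, x} : Finset V) ∩ S := by
        simp only [Finset.mem_inter]; exact ⟨by simp, hxSmem⟩
      rw [heS, Finset.mem_singleton] at this
      exact hxv this
    exact ⟨x, Finset.mem_sdiff.2 ⟨(mem_N K).2 he1, hxS⟩, rfl⟩

lemma cross_compl (K : SComplex V) (S : Finset V) :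
    (K.edges.filter fun e => (e ∩ Sᶜ).card = 1) = K.edges.filter fun e => (e ∩ S).card = 1 := by
  refine Finset.filter_congr fun e he => ?_
  have h2 : e.card = 2 := edge_card K he
  have hsd : e ∩ Sᶜ = e \ S := by
    ext z
    simp [Finset.mem_compl]
  have hcard := Finset.card_inter_add_card_sdiff e S
  rw [hsd]
  constructor <;> intro h <;> omega

lemma face_compl_card (K : SComplex V) {S : Finset V} {F : Finset V} (hF : F ∈ K.faces) :
    (F ∩ Sᶜ).card = 3 - (F ∩ S).card := by
  have h3 := K.card_eq F hF
  have hsd : F ∩ Sᶜ = F \ S := by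
    ext z
    simp [Finset.mem_compl]
  have hcard := Finset.card_inter_add_card_sdiff F S
  rw [hsd]
  omega

/-- A face with exactly two vertices in `S` contains exactly two crossing edges. -/
lemma cross_in_face_two (K : SComplex V) {S : Finset V} {F : Finset V}
    (hF : F ∈ K.faces) (h2 : (F ∩ S).card = 2) :
    ((K.edges.filter fun e => (e ∩ S).card = 1).filter fun e => e ⊆ F).card = 2 := by
  have h3 := K.card_eq F hF
  have hsd : (F \ S).card = 1 := by
    have := Finset.card_inter_add_card_sdiff F S
    omega
  obtain ⟨a, b, hab, hFS⟩ := Finset.card_eq_two.1 h2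
  obtain ⟨c, hc⟩ := Finset.card_eq_one.1 hsd
  have haF : a ∈ F ∧ a ∈ S := by
    have : a ∈ F ∩ S := hFS ▸ (by simp : a ∈ ({a, b} : Finset V))
    exact Finset.mem_inter.1 this
  have hbF : b ∈ F ∧ b ∈ S := by
    have : b ∈ F ∩ S := hFS ▸ (by simp : b ∈ ({a, b} : Finset V))
    exact Finset.mem_inter.1 this
  have hcF : c ∈ F ∧ c ∉ S := by
    have : c ∈ F \ S := hc ▸ Finset.mem_singleton_self c
    exact ⟨(Finset.mem_sdiff.1 this).1, (Finset.mem_sdiff.1 this).2⟩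
  have hac : a ≠ c := fun h => hcF.2 (h ▸ haF.2)
  have hbc : b ≠ c := fun h => hcF.2 (h ▸ hbF.2)
  have hset : ((K.edges.filter fun e => (e ∩ S).card = 1).filter fun e => e ⊆ F)
      = {({a, c} : Finset V), ({b, c} : Finset V)} := by
    ext e
    simp only [Finset.mem_filter, Finset.mem_insert, Finset.mem_singleton]
    constructor
    · rintro ⟨⟨he, h1⟩, hsub⟩
      have hecard : e.card = 2 := edge_card K he
      have hes : (e \ S).card = 1 := by
        have := Finset.card_inter_add_card_sdiff e S
        omega
      have hsub1 : e \ S ⊆ F \ S := Finset.sdiff_subset_sdiff hsub (le_refl _)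
      have hsub2 : e ∩ S ⊆ F ∩ S := Finset.inter_subset_inter hsub (le_refl _)
      have heS : e \ S = {c} := by
        rw [hc] at hsub1
        exact Finset.eq_of_subset_of_card_le hsub1 (by rw [hes]; simp)
      obtain ⟨x, hx⟩ := Finset.card_eq_one.1 h1
      have hxab : x = a ∨ x = b := by
        have : x ∈ F ∩ S := hsub2 (hx ▸ Finset.mem_singleton_self x)
        rw [hFS] at this
        simpa using this
      have he_eq : e = {x, c} := by
        have := split_inter_sdiff e S
        rw [hx, heS] at this
        exact this.symm
      rcases hxab with rfl | rfl
      · exact Or.inl he_eq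
      · exact Or.inr he_eq
    · have hmem : ∀ x : V, x ∈ F → x ∈ S → x ≠ c →
          ({x, c} : Finset V) ∈ K.edges ∧ (({x, c} : Finset V) ∩ S).card = 1 ∧
            ({x, c} : Finset V) ⊆ F := by
        intro x hxF hxS hxc
        refine ⟨pair_mem_edges K hF hxF hcF.1 hxc, ?_, ?_⟩
        · have : ({x, c} : Finset V) ∩ S = {x} := by
            ext z
            simp only [Finset.mem_inter, Finset.mem_insert, Finset.mem_singleton]
            constructor
            · rintro ⟨rfl | rfl, hzS⟩
              · rfl
              · exact absurd hzS hcF.2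
            · rintro rfl; exact ⟨Or.inl rfl, hxS⟩
          rw [this]; simp
        · intro z hz
          simp only [Finset.mem_insert, Finset.mem_singleton] at hz
          rcases hz with rfl | rfl <;> [exact hxF; exact hcF.1]
      rintro (rfl | rfl)
      · obtain ⟨p, q, r⟩ := hmem a haF.1 haF.2 hac
        exact ⟨⟨p, q⟩, r⟩
      · obtain ⟨p, q, r⟩ := hmem b hbF.1 hbF.2 hbc
        exact ⟨⟨p, q⟩, r⟩
  rw [hset]
  rw [Finset.card_insert_of_notMem, Finset.card_singleton]
  simp only [Finset.mem_singleton]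
  intro h
  have : a ∈ ({b, c} : Finset V) := h ▸ (by simp : a ∈ ({a, c} : Finset V))
  simp only [Finset.mem_insert, Finset.mem_singleton] at this
  rcases this with rfl | rfl
  · exact hab rfl
  · exact hac rfl

lemma cross_in_face (K : SComplex V) (S : Finset V) {F : Finset V} (hF : F ∈ K.faces) :
    ((K.edges.filter fun e => (e ∩ S).card = 1).filter fun e => e ⊆ F).card
      = if (F ∩ S).card = 1 ∨ (F ∩ S).card = 2 then 2 else 0 := by
  have h3 := K.card_eq F hF
  have hle : (F ∩ S).card ≤ 3 := le_trans (Finset.card_le_card inter_subset_left) h3.le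
  rcases Nat.lt_or_ge (F ∩ S).card 1 with h0 | h1
  · -- card = 0
    have h0' : (F ∩ S).card = 0 := by omega
    rw [if_neg (by omega)]
    rw [Finset.card_eq_zero, Finset.filter_eq_empty_iff]
    intro e he
    simp only [Finset.mem_filter] at he
    intro hsub
    have : e ∩ S ⊆ F ∩ S := Finset.inter_subset_inter hsub (le_refl _)
    have h00 : F ∩ S = ∅ := Finset.card_eq_zero.1 h0'
    rw [h00, Finset.subset_empty] at this
    rw [this] at he
    simp at he
  rcases Nat.lt_or_ge (F ∩ S).card 3 with h2 | h33
  · -- card = 1 or 2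
    rw [if_pos (by omega)]
    rcases Nat.lt_or_ge (F ∩ S).card 2 with hc1 | hc2
    · -- card = 1 : use the complement
      have hcc : (F ∩ Sᶜ).card = 2 := by rw [face_compl_card K hF]; omega
      rw [← cross_compl K S]
      exact cross_in_face_two K hF hcc
    · exact cross_in_face_two K hF (by omega)
  · -- card = 3 : F ⊆ S
    have hFS : F ⊆ S := by
      have : F ∩ S = F :=
        Finset.eq_of_subset_of_card_le inter_subset_left (by omega)
      exact Finset.inter_eq_left.1 this
    rw [if_neg (by omega)]
    rw [Finset.card_eq_zero, Finset.filter_eq_empty_iff]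
    intro e he
    simp only [Finset.mem_filter] at he
    intro hsub
    have : e ∩ S = e := Finset.inter_eq_left.2 (hsub.trans hFS)
    rw [this] at he
    have := edge_card K he.1
    omega

/-- The number of mixed faces equals the number of crossing edges. -/
lemma mixed_count (K : SComplex V) (hK : K.IsClosedSurface) (S : Finset V) :
    (K.faces.filter fun F => (F ∩ S).card = 1 ∨ (F ∩ S).card = 2).card
      = (K.edges.filter fun e => (e ∩ S).card = 1).card := by
  have hdc := double_count_subset (K.edges.filter fun e => (e ∩ S).card = 1) K.faces
  have hlhs : ∑ e ∈ K.edges.filter fun e => (e ∩ S).card = 1,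
      (K.faces.filter fun F => e ⊆ F).card
      = 2 * (K.edges.filter fun e => (e ∩ S).card = 1).card := by
    rw [Finset.card_eq_sum_ones (K.edges.filter fun e => (e ∩ S).card = 1), Finset.mul_sum]
    refine Finset.sum_congr rfl fun e he => ?_
    rw [hK.2.1 e (Finset.mem_filter.1 he).1]
    omega
  have hrhs : ∑ F ∈ K.faces,
      ((K.edges.filter fun e => (e ∩ S).card = 1).filter fun e => e ⊆ F).card
      = 2 * (K.faces.filter fun F => (F ∩ S).card = 1 ∨ (F ∩ S).card = 2).card := by
    rw [Finset.card_filter, Finset.mul_sum]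
    refine Finset.sum_congr rfl fun F hF => ?_
    rw [cross_in_face K S hF]
    split_ifs <;> simp
  rw [hlhs, hrhs] at hdc
  omega

lemma even_swap {α : Type*} [DecidableEq α] [Fintype α] (Q : Finset (α × α))
    (hsym : ∀ p ∈ Q, (p.2, p.1) ∈ Q) (hirr : ∀ p ∈ Q, p.1 ≠ p.2) : Even Q.card := by
  classical
  let f := Fintype.equivFin α
  have hsplit := Finset.card_filter_add_card_filter_not
      (s := Q) (p := fun p => f p.1 < f p.2)
  have hneg : Q.filter (fun p => ¬ f p.1 < f p.2) = Q.filter (fun p => f p.2 < f p.1) := by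
    refine Finset.filter_congr fun p hp => ?_
    have hne : f p.1 ≠ f p.2 := fun h => hirr p hp (f.injective h)
    constructor
    · intro h
      rcases lt_or_gt_of_ne hne with h' | h'
      · exact absurd h' h
      · exact h'
    · exact fun h' => lt_asymm h'
  have hcard : (Q.filter fun p => f p.1 < f p.2).card
      = (Q.filter fun p => f p.2 < f p.1).card := by
    apply Finset.card_bij (fun p _ => (p.2, p.1))
    · intro p hp
      simp only [Finset.mem_filter] at hp ⊢
      exact ⟨hsym p hp.1, hp.2⟩
    · intro p hp q hq h
      have h1 : p.2 = q.2 := congrArg Prod.fst h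
      have h2 : p.1 = q.1 := congrArg Prod.snd h
      exact Prod.ext h2 h1
    · intro q hq
      simp only [Finset.mem_filter] at hq ⊢
      exact ⟨(q.2, q.1), ⟨hsym q hq.1, hq.2⟩, rfl⟩
  rw [hneg] at hsplit
  exact ⟨(Q.filter fun p => f p.2 < f p.1).card, by omega⟩

lemma exists_crossing (K : SComplex V) (hc : K.Connected) {S : Finset V}
    (hS : S.Nonempty) (hS' : ∃ w, w ∉ S) :
    ∃ a ∈ S, ∃ b, b ∉ S ∧ ({a, b} : Finset V) ∈ K.edges := by
  obtain ⟨u, hu⟩ := hS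
  obtain ⟨w, hw⟩ := hS'
  have H : ∀ x : V, Relation.ReflTransGen (fun a b => ({a, b} : Finset V) ∈ K.edges) u x →
      x ∉ S → ∃ a ∈ S, ∃ b, b ∉ S ∧ ({a, b} : Finset V) ∈ K.edges := by
    intro x hx
    induction hx with
    | refl => exact fun h => absurd hu h
    | @tail b c h1 h2 ih =>
      intro hcS
      by_cases hb : b ∈ S
      · exact ⟨b, hb, c, hcS, h2⟩
      · exact ih hb
  exact H w (hc u w) hw

lemma face_inter_two (K : SComplex V) {S : Finset V} {v x y : V} (hv : v ∈ S) (hy : y ∈ S)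
    (hx : x ∉ S) (hface : ({v, x, y} : Finset V) ∈ K.faces) :
    (({v, x, y} : Finset V) ∩ S).card = 2 := by
  have hne := face_ne K hface
  have heq : ({v, x, y} : Finset V) ∩ S = {v, y} := by
    ext z
    simp only [Finset.mem_inter, Finset.mem_insert, Finset.mem_singleton]
    constructor
    · rintro ⟨rfl | rfl | rfl, hzS⟩
      · exact Or.inl rfl
      · exact absurd hzS hx
      · exact Or.inr rfl
    · rintro (rfl | rfl)
      · exact ⟨Or.inl rfl, hv⟩
      · exact ⟨Or.inr (Or.inr rfl), hy⟩
  rw [heq, Finset.card_pair (Ne.symm hne.1)]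

/-- The faces witnessing a boundary link-edge at `v`. -/
def bset (K : SComplex V) (S : Finset V) (v : V) : Finset (Finset V) :=
  (K.faces.filter fun F => (F ∩ S).card = 2).filter fun F => v ∈ F

lemma sum_bset (K : SComplex V) (S : Finset V) :
    ∑ v ∈ S, (bset K S v).card
      = 2 * (K.faces.filter fun F => (F ∩ S).card = 2).card := by
  simp only [bset]
  rw [double_count_mem S (K.faces.filter fun F => (F ∩ S).card = 2)]
  rw [Finset.card_eq_sum_ones (K.faces.filter fun F => (F ∩ S).card = 2), Finset.mul_sum]
  refine Finset.sum_congr rfl fun F hF => ?_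
  have := (Finset.mem_filter.1 hF).2
  omega

lemma bset_even (K : SComplex V) (hK : K.IsClosedSurface) (hd : ∀ v : V, K.degree v = 6)
    (S : Finset V) {v : V} (hv : v ∈ S) : Even (bset K S v).card := by
  classical
  set P : Finset (V × V) :=
    Finset.univ.filter fun p => p.1 ∉ S ∧ p.2 ∈ S ∧ ({v, p.1, p.2} : Finset V) ∈ K.faces with hP
  set W : Finset (V × V) :=
    Finset.univ.filter fun p => p.1 ∉ S ∧ ({v, p.1, p.2} : Finset V) ∈ K.faces with hW
  set Q : Finset (V × V) :=
    Finset.univ.filter fun p => p.1 ∉ S ∧ p.2 ∉ S ∧ ({v, p.1, p.2} : Finset V) ∈ K.faces with hQ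
  -- step 1: bset has the same cardinality as P
  have hbP : (P).card = (bset K S v).card := by
    apply Finset.card_bij (fun p _ => ({v, p.1, p.2} : Finset V))
    · intro p hp
      simp only [hP, Finset.mem_filter, Finset.mem_univ, true_and] at hp
      obtain ⟨h1, h2, h3⟩ := hp
      refine Finset.mem_filter.2 ⟨Finset.mem_filter.2 ⟨h3, ?_⟩, by simp⟩
      exact face_inter_two K hv h2 h1 h3
    · intro p hp q hq h
      simp only [hP, Finset.mem_filter, Finset.mem_univ, true_and] at hp hq
      obtain ⟨hp1, hp2, hp3⟩ := hp
      obtain ⟨hq1, hq2, hq3⟩ := hq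
      have hnep := face_ne K hp3
      have h1 : p.1 = q.1 := by
        have hmem : p.1 ∈ ({v, q.1, q.2} : Finset V) :=
          h ▸ (by simp : p.1 ∈ ({v, p.1, p.2} : Finset V))
        simp only [Finset.mem_insert, Finset.mem_singleton] at hmem
        rcases hmem with h' | h' | h'
        · exact absurd hv (h' ▸ hp1)
        · exact h'
        · exact absurd hq2 (h' ▸ hp1)
      have h2 : p.2 = q.2 := by
        have hmem : p.2 ∈ ({v, q.1, q.2} : Finset V) :=
          h ▸ (by simp : p.2 ∈ ({v, p.1, p.2} : Finset V))
        simp only [Finset.mem_insert, Finset.mem_singleton] at hmem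
        rcases hmem with h' | h' | h'
        · exact absurd h' hnep.1
        · exact absurd (h' ▸ hp2) hq1
        · exact h' 
      exact Prod.ext h1 h2
    · intro F hF
      simp only [bset, Finset.mem_filter] at hF
      obtain ⟨⟨hFf, hF2⟩, hvF⟩ := hF
      have hvFS : v ∈ F ∩ S := Finset.mem_inter.2 ⟨hvF, hv⟩
      obtain ⟨y, hyv, hFSy⟩ := card_two_mem hF2 hvFS
      have hsd1 : (F \ S).card = 1 := by
        have := Finset.card_inter_add_card_sdiff F S
        have := K.card_eq F hFf
        omega
      obtain ⟨x, hx⟩ := Finset.card_eq_one.1 hsd1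
      have hxF : x ∈ F \ S := hx ▸ Finset.mem_singleton_self x
      rw [Finset.mem_sdiff] at hxF
      have hyF : y ∈ F ∩ S := hFSy ▸ (by simp : y ∈ ({v, y} : Finset V))
      rw [Finset.mem_inter] at hyF
      have hFeq : F = ({v, x, y} : Finset V) := by
        ext z
        simp only [Finset.mem_insert, Finset.mem_singleton]
        constructor
        · intro hz
          by_cases hzS : z ∈ S
          · have : z ∈ F ∩ S := Finset.mem_inter.2 ⟨hz, hzS⟩
            rw [hFSy] at this
            simp only [Finset.mem_insert, Finset.mem_singleton] at this
            tauto
          · have : z ∈ F \ S := Finset.mem_sdiff.2 ⟨hz, hzS⟩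
            rw [hx] at this
            simp only [Finset.mem_singleton] at this
            tauto
        · rintro (rfl | rfl | rfl)
          · exact hvF
          · exact hxF.1
          · exact hyF.1
      refine ⟨(x, y), ?_, hFeq.symm⟩
      simp only [hP, Finset.mem_filter, Finset.mem_univ, true_and]
      exact ⟨hxF.2, hyF.2, hFeq ▸ hFf⟩
  -- step 2: split W into P and Q
  have hPW : W.filter (fun p => p.2 ∈ S) = P := by
    ext p
    simp only [hP, hW, Finset.mem_filter, Finset.mem_univ, true_and]
    tauto
  have hQW : W.filter (fun p => ¬ p.2 ∈ S) = Q := by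
    ext p
    simp only [hQ, hW, Finset.mem_filter, Finset.mem_univ, true_and]
    tauto
  have hsplit : P.card + Q.card = W.card := by
    rw [← hPW, ← hQW]
    exact Finset.card_filter_add_card_filter_not _
  -- step 3: W has even cardinality
  have hWcard : W.card = 2 * (N K v \ S).card := by
    have hfib : ∀ p ∈ W, p.1 ∈ N K v \ S := by
      intro p hp
      simp only [hW, Finset.mem_filter, Finset.mem_univ, true_and] at hp
      exact Finset.mem_sdiff.2 ⟨face_mem_N' K hp.2, hp.1⟩
    rw [Finset.card_eq_sum_card_fiberwise hfib]
    rw [Finset.card_eq_sum_ones (N K v \ S), Finset.mul_sum]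
    refine Finset.sum_congr rfl fun x hx => ?_
    have hxN : x ∈ N K v := (Finset.mem_sdiff.1 hx).1
    have hxS : x ∉ S := (Finset.mem_sdiff.1 hx).2
    have hfiber : (W.filter fun p => p.1 = x).card = (L K v x).card := by
      symm
      apply Finset.card_bij (fun y _ => ((x, y) : V × V))
      · intro y hy
        rw [mem_L] at hy
        refine Finset.mem_filter.2 ⟨?_, rfl⟩
        refine Finset.mem_filter.2 ⟨Finset.mem_univ _, hxS, hy⟩
      · intro a _ b _ h
        exact congrArg Prod.snd h
      · intro p hp
        simp only [hW, Finset.mem_filter, Finset.mem_univ, true_and] at hp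
        obtain ⟨⟨hp1, hp2⟩, hp3⟩ := hp
        refine ⟨p.2, ?_, Prod.ext hp3.symm rfl⟩
        rw [mem_L, ← hp3]
        exact hp2
    rw [hfiber, card_L K hK ((mem_N K).1 hxN)]
    omega
  -- step 4: Q is even
  have hQeven : Even Q.card := by
    apply even_swap
    · intro p hp
      simp only [hQ, Finset.mem_filter, Finset.mem_univ, true_and] at hp ⊢
      refine ⟨hp.2.1, hp.1, ?_⟩
      have : ({p.2, p.1} : Finset V) = {p.1, p.2} := Finset.pair_comm _ _
      rw [show ({v, p.2, p.1} : Finset V) = insert v ({p.2, p.1} : Finset V) from rfl, this]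
      exact hp.2.2
    · intro p hp
      simp only [hQ, Finset.mem_filter, Finset.mem_univ, true_and] at hp
      exact fun h => (face_ne K hp.2.2).2.1 (h ▸ rfl)
  -- combine
  rw [← hbP]
  obtain ⟨q, hq⟩ := hQeven
  refine ⟨(N K v \ S).card - q, ?_⟩
  omega

lemma bset_pos (K : SComplex V) (hK : K.IsClosedSurface) {S : Finset V} {v : V}
    (hvS : v ∈ S) (h1 : (N K v \ S).Nonempty) (h2 : (N K v ∩ S).Nonempty) :
    1 ≤ (bset K S v).card := by
  obtain ⟨y0, hy0⟩ := h2
  have hy0T : y0 ∉ N K v \ S := fun h =>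
    (Finset.mem_sdiff.1 h).2 (Finset.mem_inter.1 hy0).2
  obtain ⟨x, hx, y, hface, hyT⟩ :=
    exists_boundary K hK Finset.sdiff_subset h1 (Finset.mem_inter.1 hy0).1 hy0T
  have hyN : y ∈ N K v := face_mem_N K hface
  have hyS : y ∈ S := by
    by_contra h
    exact hyT (Finset.mem_sdiff.2 ⟨hyN, h⟩)
  have hxS : x ∉ S := (Finset.mem_sdiff.1 hx).2
  rw [Nat.succ_le_iff, Finset.card_pos]
  refine ⟨({v, x, y} : Finset V), ?_⟩
  refine Finset.mem_filter.2 ⟨Finset.mem_filter.2 ⟨hface, ?_⟩, by simp⟩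
  exact face_inter_two K hvS hyS hxS hface

/-- Key lemma: there cannot be at most 5 crossing edges with at most two faces having
exactly two vertices in `S`. -/
lemma aux_main (K : SComplex V) (hK : K.IsClosedSurface) (hc : K.Connected)
    (hd : ∀ v : V, K.degree v = 6) (S : Finset V) (hS : S.Nonempty) (hS' : ∃ w, w ∉ S)
    (hk : (K.edges.filter fun e => (e ∩ S).card = 1).card ≤ 5)
    (hA : (K.faces.filter fun F => (F ∩ S).card = 2).card ≤ 2) : False := by
  classical
  set k := (K.edges.filter fun e => (e ∩ S).card = 1).card with hkdef
  set B := S.filter (fun v => (N K v \ S).Nonempty) with hBdef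
  have hcsum : k = ∑ v ∈ S, (N K v \ S).card := cross_eq_sum K S
  have hcB : k = ∑ v ∈ B, (N K v \ S).card := by
    rw [hcsum]
    symm
    apply Finset.sum_subset (Finset.filter_subset _ _)
    intro v hv hvB
    rw [Finset.card_eq_zero, ← Finset.not_nonempty_iff_eq_empty]
    intro hne
    exact hvB (Finset.mem_filter.2 ⟨hv, hne⟩)
  have hcle : ∀ v ∈ B, (N K v \ S).card ≤ k := by
    intro v hv
    rw [hcB]
    exact Finset.single_le_sum (f := fun v => (N K v \ S).card) (fun i _ => Nat.zero_le _) hv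
  have hNS : ∀ v ∈ B, (N K v ∩ S).Nonempty := by
    intro v hv
    have h6 := card_N K hd v
    have hsd := Finset.card_sdiff_add_card_inter (N K v) S
    have := hcle v hv
    rw [← Finset.card_pos]
    omega
  have hB2 : ∀ v ∈ B, 2 ≤ (bset K S v).card := by
    intro v hv
    have hvS : v ∈ S := (Finset.mem_filter.1 hv).1
    have h1 := bset_pos K hK hvS (Finset.mem_filter.1 hv).2 (hNS v hv)
    obtain ⟨r, hr⟩ := bset_even K hK hd S hvS
    omega
  have hsumb := sum_bset K S
  obtain ⟨a, haS, b, hbS, hab⟩ := exists_crossing K hc hS hS'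
  have haB : a ∈ B :=
    Finset.mem_filter.2 ⟨haS, ⟨b, Finset.mem_sdiff.2 ⟨(mem_N K).2 hab, hbS⟩⟩⟩
  have hBcard : B.card ≤ 2 := by
    by_contra h
    push_neg at h
    have h1 : ∑ v ∈ B, (bset K S v).card ≤ ∑ v ∈ S, (bset K S v).card :=
      Finset.sum_le_sum_of_subset (Finset.filter_subset _ _)
    have h2 : 2 * B.card ≤ ∑ v ∈ B, (bset K S v).card := by
      calc 2 * B.card = ∑ _v ∈ B, 2 := by rw [Finset.sum_const, smul_eq_mul, mul_comm]
        _ ≤ _ := Finset.sum_le_sum hB2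
    omega
  have hBpos : 1 ≤ B.card := Finset.card_pos.2 ⟨a, haB⟩
  have hBcases : B.card = 1 ∨ B.card = 2 := by omega
  rcases hBcases with hB1 | hB2c
  · -- Case 1: a single boundary vertex u
    obtain ⟨u, hu⟩ := Finset.card_eq_one.1 hB1
    have huB : u ∈ B := by rw [hu]; exact Finset.mem_singleton_self u
    have huS : u ∈ S := (Finset.mem_filter.1 huB).1
    have hkc : k = (N K u \ S).card := by rw [hcB, hu, Finset.sum_singleton]
    -- the complement side of the crossing count
    have hcompl : k = ∑ w ∈ Sᶜ, (N K w ∩ S).card := by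
      have h1' := cross_eq_sum K Sᶜ
      rw [cross_compl] at h1'
      rw [← hkdef] at h1'
      rw [h1']
      refine Finset.sum_congr rfl fun w hw => ?_
      congr 1
      ext z
      simp [Finset.mem_sdiff, Finset.mem_compl]
    have hsubc : N K u \ S ⊆ Sᶜ := fun x hx =>
      Finset.mem_compl.2 (Finset.mem_sdiff.1 hx).2
    have hge : ∀ w ∈ N K u \ S, 1 ≤ (N K w ∩ S).card := by
      intro w hw
      rw [Nat.succ_le_iff, Finset.card_pos]
      exact ⟨u, Finset.mem_inter.2 ⟨mem_N_symm K (Finset.mem_sdiff.1 hw).1, huS⟩⟩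
    have hsumle : ∑ w ∈ N K u \ S, (N K w ∩ S).card ≤ k := by
      rw [hcompl]
      exact Finset.sum_le_sum_of_subset hsubc
    have hone : ∀ w ∈ N K u \ S, N K w ∩ S = {u} := by
      intro w hw
      have hcard1 : (N K w ∩ S).card = 1 := by
        by_contra hne
        have h2' : 2 ≤ (N K w ∩ S).card := by
          have := hge w hw
          omega
        have hstrict : ∑ w' ∈ N K u \ S, 1 < ∑ w' ∈ N K u \ S, (N K w' ∩ S).card :=
          Finset.sum_lt_sum hge ⟨w, hw, by omega⟩
        rw [Finset.sum_const, smul_eq_mul, mul_one] at hstrict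
        have hfin : k < k := by
          calc k = (N K u \ S).card := hkc
            _ < ∑ w' ∈ N K u \ S, (N K w' ∩ S).card := hstrict
            _ ≤ k := hsumle
        exact absurd hfin (lt_irrefl k)
      have husub : ({u} : Finset V) ⊆ N K w ∩ S := by
        intro z hz
        rw [Finset.mem_singleton] at hz
        subst hz
        exact Finset.mem_inter.2 ⟨mem_N_symm K (Finset.mem_sdiff.1 hw).1, huS⟩
      exact (Finset.eq_of_subset_of_card_le husub
        (by rw [Finset.card_singleton]; omega)).symm
    -- derive the contradiction from the link of u
    have hTne : (N K u \ S).Nonempty := (Finset.mem_filter.1 huB).2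
    obtain ⟨y0, hy0⟩ := hNS u huB
    have hy0T : y0 ∉ N K u \ S := fun h =>
      (Finset.mem_sdiff.1 h).2 (Finset.mem_inter.1 hy0).2
    obtain ⟨x, hx, y, hface, hyT⟩ :=
      exists_boundary K hK Finset.sdiff_subset hTne (Finset.mem_inter.1 hy0).1 hy0T
    have hyN : y ∈ N K u := face_mem_N K hface
    have hyS : y ∈ S := by
      by_contra h
      exact hyT (Finset.mem_sdiff.2 ⟨hyN, h⟩)
    have hyNx : y ∈ N K x := face_mem_Nx K hface
    have hyu : y ∈ ({u} : Finset V) := by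
      rw [← hone x hx]
      exact Finset.mem_inter.2 ⟨hyNx, hyS⟩
    exact (face_ne K hface).1 (Finset.mem_singleton.1 hyu)
  · -- Case 2: exactly two boundary vertices
    obtain ⟨u1, u2, hu12, hB⟩ := Finset.card_eq_two.1 hB2c
    have hu1B : u1 ∈ B := by rw [hB]; simp
    have hu2B : u2 ∈ B := by rw [hB]; simp
    have hu1S : u1 ∈ S := (Finset.mem_filter.1 hu1B).1
    have hu2S : u2 ∈ S := (Finset.mem_filter.1 hu2B).1
    -- both bset cards are 2 and there are exactly two mixed-2 faces
    have hpairsub : ({u1, u2} : Finset V) ⊆ S := by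
      intro z hz
      simp only [Finset.mem_insert, Finset.mem_singleton] at hz
      rcases hz with rfl | rfl <;> assumption
    have hsum_pair : (bset K S u1).card + (bset K S u2).card
        ≤ ∑ v ∈ S, (bset K S v).card := by
      have h := Finset.sum_le_sum_of_subset (f := fun v => (bset K S v).card) hpairsub
      rwa [Finset.sum_pair hu12] at h
    have hA2 : (K.faces.filter fun F => (F ∩ S).card = 2).card = 2 := by
      have := hB2 u1 hu1B
      have := hB2 u2 hu2B
      omega
    obtain ⟨F1, F2, hF12, hFset⟩ := Finset.card_eq_two.1 hA2
    have hF1 : F1 ∈ K.faces ∧ (F1 ∩ S).card = 2 := by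
      have : F1 ∈ K.faces.filter fun F => (F ∩ S).card = 2 := by rw [hFset]; simp
      exact ⟨(Finset.mem_filter.1 this).1, (Finset.mem_filter.1 this).2⟩
    have hF2 : F2 ∈ K.faces ∧ (F2 ∩ S).card = 2 := by
      have : F2 ∈ K.faces.filter fun F => (F ∩ S).card = 2 := by rw [hFset]; simp
      exact ⟨(Finset.mem_filter.1 this).1, (Finset.mem_filter.1 this).2⟩
    -- every mixed-2 face has S-part exactly {u1, u2}
    have hpart : ∀ F, F ∈ K.faces → (F ∩ S).card = 2 → F ∩ S = {u1, u2} := by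
      intro F hF hcF
      have hsub : F ∩ S ⊆ B := by
        intro z hz
        have hzF : z ∈ F := (Finset.mem_inter.1 hz).1
        have hzS : z ∈ S := (Finset.mem_inter.1 hz).2
        refine Finset.mem_filter.2 ⟨hzS, ?_⟩
        have hsd1 : (F \ S).card = 1 := by
          have := Finset.card_inter_add_card_sdiff F S
          have := K.card_eq F hF
          omega
        obtain ⟨x, hx⟩ := Finset.card_eq_one.1 hsd1
        have hxF : x ∈ F \ S := hx ▸ Finset.mem_singleton_self x
        rw [Finset.mem_sdiff] at hxF
        refine ⟨x, Finset.mem_sdiff.2 ⟨?_, hxF.2⟩⟩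
        rw [mem_N]
        exact pair_mem_edges K hF hzF hxF.1 (fun h => hxF.2 (h ▸ hzS))
      rw [hB] at hsub
      apply Finset.eq_of_subset_of_card_le hsub
      rw [Finset.card_pair hu12]
      omega
    -- third vertices of the two mixed-2 faces
    have hthird : ∀ F, F ∈ K.faces → (F ∩ S).card = 2 →
        ∃ w, w ∉ S ∧ F = ({u1, u2, w} : Finset V) := by
      intro F hF hcF
      have h1 : F ∩ S = {u1, u2} := hpart F hF hcF
      have hsd1 : (F \ S).card = 1 := by
        have := Finset.card_inter_add_card_sdiff F S
        have := K.card_eq F hF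
        omega
      obtain ⟨w, hw⟩ := Finset.card_eq_one.1 hsd1
      have hwF : w ∈ F \ S := hw ▸ Finset.mem_singleton_self w
      rw [Finset.mem_sdiff] at hwF
      refine ⟨w, hwF.2, ?_⟩
      have hsp := split_inter_sdiff F S
      rw [h1, hw] at hsp
      rw [← hsp]
      ext z
      simp only [Finset.mem_union, Finset.mem_insert, Finset.mem_singleton]
      tauto
    obtain ⟨w1, hw1S, hF1w⟩ := hthird F1 hF1.1 hF1.2
    obtain ⟨w2, hw2S, hF2w⟩ := hthird F2 hF2.1 hF2.2
    have hw12 : w1 ≠ w2 := by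
      rintro rfl
      exact hF12 (hF1w.trans hF2w.symm)
    have hu1F1 : u1 ∈ F1 := by rw [hF1w]; simp
    have hu2F1 : u2 ∈ F1 := by rw [hF1w]; simp
    have hedgeu : ({u1, u2} : Finset V) ∈ K.edges :=
      pair_mem_edges K hF1.1 hu1F1 hu2F1 hu12
    have hu2N : u2 ∈ N K u1 := (mem_N K).2 hedgeu
    -- the two faces on the edge {u1, u2} are exactly F1 and F2
    have hfE : ({F1, F2} : Finset (Finset V))
        = K.faces.filter (fun F => ({u1, u2} : Finset V) ⊆ F) := by
      apply Finset.eq_of_subset_of_card_le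
      · intro G hG
        simp only [Finset.mem_insert, Finset.mem_singleton] at hG
        rcases hG with rfl | rfl
        · refine Finset.mem_filter.2 ⟨hF1.1, ?_⟩
          intro z hz
          simp only [Finset.mem_insert, Finset.mem_singleton] at hz
          rcases hz with rfl | rfl <;> [exact hu1F1; exact hu2F1]
        · refine Finset.mem_filter.2 ⟨hF2.1, ?_⟩
          intro z hz
          simp only [Finset.mem_insert, Finset.mem_singleton] at hz
          rcases hz with rfl | rfl <;> rw [hF2w] <;> simp
      · rw [hK.2.1 _ hedgeu, Finset.card_insert_of_notMem (by simp [hF12]),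
          Finset.card_singleton]
    have hfaceu : ∀ y : V, ({u1, u2, y} : Finset V) ∈ K.faces → y = w1 ∨ y = w2 := by
      intro y hy
      have hG : ({u1, u2, y} : Finset V) ∈ K.faces.filter
          (fun F => ({u1, u2} : Finset V) ⊆ F) := by
        refine Finset.mem_filter.2 ⟨hy, ?_⟩
        intro z hz
        simp only [Finset.mem_insert, Finset.mem_singleton] at hz
        rcases hz with rfl | rfl <;> simp
      rw [← hfE] at hG
      simp only [Finset.mem_insert, Finset.mem_singleton] at hG
      have hne := face_ne K hy
      rcases hG with h | h
      · left
        have hyF : y ∈ F1 := by rw [← h]; simp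
        rw [hF1w] at hyF
        simp only [Finset.mem_insert, Finset.mem_singleton] at hyF
        rcases hyF with h' | h' | h'
        · exact absurd h' hne.1
        · exact absurd h' hne.2.1
        · exact h'
      · right
        have hyF : y ∈ F2 := by rw [← h]; simp
        rw [hF2w] at hyF
        simp only [Finset.mem_insert, Finset.mem_singleton] at hyF
        rcases hyF with h' | h' | h'
        · exact absurd h' hne.1
        · exact absurd h' hne.2.1
        · exact h'
    have hthirdS : ∀ y : V, ({u1, u2, y} : Finset V) ∈ K.faces → y ∉ S := by
      intro y hy
      rcases hfaceu y hy with rfl | rfl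
      · exact hw1S
      · exact hw2S
    -- the key estimate: both u1 and u2 have at least 5 outside neighbours
    have key : ∀ a b : V, ({a, b} : Finset V) = ({u1, u2} : Finset V) → a ∈ S → b ∈ S →
        b ∈ N K a → 5 ≤ (N K a \ S).card := by
      intro a b hpair haS' hbS' hbN
      have hzz : ∀ z : V, (z = a ∨ z = b) ↔ (z = u1 ∨ z = u2) := by
        intro z
        have h1 : z ∈ ({a, b} : Finset V) ↔ z ∈ ({u1, u2} : Finset V) := by rw [hpair]
        simpa using h1
      set T : Finset V := (N K a \ S) ∪ {b} with hTdef
      have hTN : T ⊆ N K a := by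
        intro z hz
        rcases Finset.mem_union.1 hz with h | h
        · exact (Finset.mem_sdiff.1 h).1
        · rw [Finset.mem_singleton.1 h]
          exact hbN
      have hbT : b ∈ T := Finset.mem_union_right _ (Finset.mem_singleton_self b)
      have hcl : ∀ x ∈ T, ∀ y, ({a, x, y} : Finset V) ∈ K.faces → y ∈ T := by
        intro x hx y hy
        have hyN : y ∈ N K a := face_mem_N K hy
        rcases Finset.mem_union.1 hx with hx' | hx'
        · by_cases hyS : y ∈ S
          · have hxS := (Finset.mem_sdiff.1 hx').2
            have hGcard : (({a, x, y} : Finset V) ∩ S).card = 2 :=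
              face_inter_two K haS' hyS hxS hy
            have hGpart := hpart _ hy hGcard
            have hyG : y ∈ ({a, x, y} : Finset V) ∩ S :=
              Finset.mem_inter.2 ⟨by simp, hyS⟩
            rw [hGpart] at hyG
            simp only [Finset.mem_insert, Finset.mem_singleton] at hyG
            have hy' : y = a ∨ y = b := (hzz y).2 hyG
            rcases hy' with h' | h'
            · exact absurd h' (face_ne K hy).1
            · rw [h']
              exact hbT
          · exact Finset.mem_union_left _ (Finset.mem_sdiff.2 ⟨hyN, hyS⟩)
        · rw [Finset.mem_singleton] at hx'
          have haby : ({a, x, y} : Finset V) = ({u1, u2, y} : Finset V) := by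
            rw [hx']
            ext z
            simp only [Finset.mem_insert, Finset.mem_singleton]
            constructor
            · rintro (rfl | rfl | rfl)
              · rcases (hzz z).1 (Or.inl rfl) with h' | h'
                · exact Or.inl h'
                · exact Or.inr (Or.inl h')
              · rcases (hzz z).1 (Or.inr rfl) with h' | h'
                · exact Or.inl h'
                · exact Or.inr (Or.inl h')
              · exact Or.inr (Or.inr rfl)
            · rintro (rfl | rfl | rfl)
              · rcases (hzz z).2 (Or.inl rfl) with h' | h'
                · exact Or.inl h'
                · exact Or.inr (Or.inl h')
              · rcases (hzz z).2 (Or.inr rfl) with h' | h'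
                · exact Or.inl h'
                · exact Or.inr (Or.inl h')
              · exact Or.inr (Or.inr rfl)
          rw [haby] at hy
          have hyS : y ∉ S := hthirdS y hy
          exact Finset.mem_union_left _ (Finset.mem_sdiff.2 ⟨hyN, hyS⟩)
      have hNT : ∀ z ∈ N K a, z ∈ T := fun z hz => link_closed K hK hTN hcl hbT hz
      have hNSb : N K a ∩ S ⊆ {b} := by
        intro z hz
        rcases Finset.mem_union.1 (hNT z (Finset.mem_inter.1 hz).1) with h | h
        · exact absurd (Finset.mem_inter.1 hz).2 (Finset.mem_sdiff.1 h).2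
        · exact h
      have hNcard := card_N K hd a
      have hsd := Finset.card_sdiff_add_card_inter (N K a) S
      have hle1 : (N K a ∩ S).card ≤ 1 :=
        le_trans (Finset.card_le_card hNSb) (by simp)
      omega
    have h5a := key u1 u2 rfl hu1S hu2S hu2N
    have h5b := key u2 u1 (Finset.pair_comm u2 u1) hu2S hu1S (mem_N_symm K hu2N)
    have hksum : k = (N K u1 \ S).card + (N K u2 \ S).card := by
      rw [hcB, hB, Finset.sum_pair hu12]
    omega

/-- At least six crossing edges for any proper nonempty subset. -/
lemma six_le_cross (K : SComplex V) (hK : K.IsClosedSurface) (hc : K.Connected)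
    (hd : ∀ v : V, K.degree v = 6) (S : Finset V) (hS : S.Nonempty) (hS' : ∃ w, w ∉ S) :
    6 ≤ (K.edges.filter fun e => (e ∩ S).card = 1).card := by
  classical
  by_contra h
  push_neg at h
  have hk : (K.edges.filter fun e => (e ∩ S).card = 1).card ≤ 5 := by omega
  have hmix := mixed_count K hK S
  have hsplit : (K.faces.filter fun F => (F ∩ S).card = 1 ∨ (F ∩ S).card = 2).card
      = (K.faces.filter fun F => (F ∩ S).card = 1).card
        + (K.faces.filter fun F => (F ∩ S).card = 2).card := by
    rw [Finset.filter_or]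
    apply Finset.card_union_of_disjoint
    rw [Finset.disjoint_left]
    intro F h1 h2
    have := (Finset.mem_filter.1 h1).2
    have := (Finset.mem_filter.1 h2).2
    omega
  have hcase : (K.faces.filter fun F => (F ∩ S).card = 2).card ≤ 2
      ∨ (K.faces.filter fun F => (F ∩ S).card = 1).card ≤ 2 := by omega
  rcases hcase with hA | hA
  · exact aux_main K hK hc hd S hS hS' hk hA
  · obtain ⟨w, hw⟩ := hS'
    obtain ⟨u, hu⟩ := hS
    have hS2 : (Sᶜ : Finset V).Nonempty := ⟨w, Finset.mem_compl.2 hw⟩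
    have hS2' : ∃ z, z ∉ (Sᶜ : Finset V) := ⟨u, fun h => (Finset.mem_compl.1 h) hu⟩
    have hk' : (K.edges.filter fun e => (e ∩ Sᶜ).card = 1).card ≤ 5 := by
      rw [cross_compl]
      exact hk
    have hA' : (K.faces.filter fun F => (F ∩ Sᶜ).card = 2).card ≤ 2 := by
      have heq : (K.faces.filter fun F => (F ∩ Sᶜ).card = 2)
          = K.faces.filter fun F => (F ∩ S).card = 1 := by
        refine Finset.filter_congr fun F hF => ?_
        rw [face_compl_card K hF]
        have h3 := K.card_eq F hF
        have hle : (F ∩ S).card ≤ 3 :=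
          le_trans (Finset.card_le_card Finset.inter_subset_left) h3.le
        omega
      rw [heq]
      exact hA
    exact aux_main K hK hc hd Sᶜ hS2 hS2' hk' hA'

end EdgeProofAux

/-- In a connected combinatorial 2-manifold with all vertex degrees `6`, any set `U` of
`m < f₀(M)` vertices spans at most `3m - 3` edges. -/
theorem edges_in_subset_le {V : Type} [DecidableEq V] [Fintype V]
    (K : SComplex V) (hK : K.IsClosedSurface) (hc : K.Connected)
    (hd : ∀ v : V, K.degree v = 6)
    (U : Finset V) (m : ℕ) (hm : U.card = m) (hlt : m < Fintype.card V) :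
    (K.edges.filter fun e => e ⊆ U).card ≤ 3 * m - 3 := by
  classical
  subst hm
  rcases Finset.eq_empty_or_nonempty U with rfl | hU
  · have hempty : (K.edges.filter fun e => e ⊆ (∅ : Finset V)) = ∅ := by
      rw [Finset.filter_eq_empty_iff]
      intro e he hsub
      have h2 := EdgeProofAux.edge_card K he
      rw [Finset.subset_empty] at hsub
      rw [hsub] at h2
      simp at h2
    rw [hempty]
    simp
  · have hUc : ∃ w, w ∉ U := by
      by_contra h
      push_neg at h
      have : U = Finset.univ := Finset.eq_univ_iff_forall.2 h
      rw [this, Finset.card_univ] at hlt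
      exact lt_irrefl _ hlt
    have h6 := EdgeProofAux.six_le_cross K hK hc hd U hU hUc
    have hdc := EdgeProofAux.degree_count K hd U
    have hm1 : 1 ≤ U.card := Finset.card_pos.2 hU
    omega
end
end

section
/- Let M be a combinatorial 2-manifold in which every vertex has degree 6, and let a_1, ..., a_5 be five distinct vertices. Then the union st(a_1) ∪ st(a_2) ∪ st(a_3) contains at least 12 faces, and st(a_1) ∪ ... ∪ st(a_5) contains strictly more than 12 faces. -/
open scoped Classical
noncomputable section

section Aux

variable {V : Type} [DecidableEq V] [Fintype V] (K : SComplex V)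

lemma face_pair_edge {F : Finset V} (hF : F ∈ K.faces) {u v : V} (hu : u ∈ F) (hv : v ∈ F)
    (huv : u ≠ v) : ({u, v} : Finset V) ∈ K.edges := by
  simp only [SComplex.edges, Finset.mem_filter, Finset.mem_univ, true_and]
  exact ⟨Finset.card_pair huv, F, hF, by simp [Finset.insert_subset_iff, hu, hv]⟩

lemma pair_filter_eq (hK : K.IsClosedSurface) {u v : V}
    (h : ({u, v} : Finset V) ∈ K.edges) :
    (K.faces.filter fun F => u ∈ F ∧ v ∈ F).card = 2 := by
  rw [← hK.2.1 _ h]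
  congr 1
  apply Finset.filter_congr
  intro F _
  simp [Finset.insert_subset_iff]

lemma pair_le (hK : K.IsClosedSurface) {u v : V} (huv : u ≠ v) :
    (K.faces.filter fun F => u ∈ F ∧ v ∈ F).card ≤ 2 := by
  by_cases h : ({u, v} : Finset V) ∈ K.edges
  · exact (pair_filter_eq K hK h).le
  · have : (K.faces.filter fun F => u ∈ F ∧ v ∈ F) = ∅ := by
      rw [Finset.filter_eq_empty_iff]
      rintro F hF ⟨hu, hv⟩
      exact h (face_pair_edge K hF hu hv huv)
    simp [this]

/-- number of neighbors equals degree -/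
lemma nbrs_card (v : V) :
    ((Finset.univ : Finset V).filter fun x => ({v, x} : Finset V) ∈ K.edges).card
      = K.degree v := by
  apply Finset.card_bij (fun x _ => ({v, x} : Finset V))
  · intro x hx
    simp only [Finset.mem_filter, Finset.mem_univ, true_and] at hx ⊢
    exact ⟨hx, Finset.mem_insert_self _ _⟩
  · intro x hx y hy hxy
    simp only [Finset.mem_filter, Finset.mem_univ, true_and, SComplex.edges] at hx hy
    have hxv : x ≠ v := by
      rintro rfl
      simp at hx
    have hyv : y ≠ v := by
      rintro rfl
      simp at hy
    have : x ∈ ({v, y} : Finset V) := hxy ▸ (by simp : x ∈ ({v, x} : Finset V))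
    simp only [Finset.mem_insert, Finset.mem_singleton] at this
    tauto
  · intro e he
    simp only [Finset.mem_filter, SComplex.edges, Finset.mem_univ, true_and] at he
    obtain ⟨⟨hc, hsub⟩, hv⟩ := he
    obtain ⟨x, y, hxy, rfl⟩ := Finset.card_eq_two.mp hc
    simp only [Finset.mem_insert, Finset.mem_singleton] at hv
    rcases hv with rfl | rfl
    · exact ⟨y, by simpa [SComplex.edges] using ⟨hc, hsub⟩, rfl⟩
    · refine ⟨x, ?_, Finset.pair_comm v x⟩
      rw [Finset.pair_comm x v] at hc hsub
      simpa [SComplex.edges] using ⟨hc, hsub⟩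

lemma pair_count (hK : K.IsClosedSurface) (v x : V) :
    (K.faces.filter fun F => v ∈ F ∧ x ∈ F ∧ x ≠ v).card
      = if ({v, x} : Finset V) ∈ K.edges then 2 else 0 := by
  split_ifs with h
  · have hxv : x ≠ v := by
      rintro rfl
      simp only [SComplex.edges, Finset.mem_filter, Finset.insert_idem] at h
      simp at h
    rw [← pair_filter_eq K hK h]
    congr 1
    apply Finset.filter_congr
    intro F _
    simp [hxv]
  · rw [Finset.card_eq_zero, Finset.filter_eq_empty_iff]
    rintro F hF ⟨hv, hx, hxv⟩
    exact h (face_pair_edge K hF hv hx (Ne.symm hxv))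

lemma star_card (hK : K.IsClosedSurface) (hd : ∀ v : V, K.degree v = 6) (v : V) :
    (K.faces.filter fun F => v ∈ F).card = 6 := by
  have key : ∑ F ∈ K.faces.filter fun F => v ∈ F, (F.erase v).card
      = ∑ x : V, (K.faces.filter fun F => v ∈ F ∧ x ∈ F ∧ x ≠ v).card := by
    have : ∀ F ∈ K.faces.filter fun F => v ∈ F, (F.erase v).card
        = ∑ x : V, if x ∈ F ∧ x ≠ v then 1 else 0 := by
      intro F hF
      rw [← Finset.card_filter]
      congr 1
      ext x
      simp [Finset.mem_erase, and_comm]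
    rw [Finset.sum_congr rfl this, Finset.sum_comm]
    congr 1
    ext x
    rw [← Finset.card_filter, Finset.filter_filter]
  have lhs : ∑ F ∈ K.faces.filter fun F => v ∈ F, (F.erase v).card
      = 2 * (K.faces.filter fun F => v ∈ F).card := by
    rw [Finset.sum_congr rfl (fun F hF => ?_), Finset.sum_const, smul_eq_mul, mul_comm]
    simp only [Finset.mem_filter] at hF
    rw [Finset.card_erase_of_mem hF.2, K.card_eq F hF.1]
  have rhs : ∑ x : V, (K.faces.filter fun F => v ∈ F ∧ x ∈ F ∧ x ≠ v).card = 12 := by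
    rw [Finset.sum_congr rfl (fun x _ => pair_count K hK v x)]
    rw [← Finset.sum_filter, Finset.sum_const, smul_eq_mul, nbrs_card K v, hd v]
  omega
  
lemma link_bound (hK : K.IsClosedSurface) (hd : ∀ v : V, K.degree v = 6)
    (v : V) (B : Finset V) (hvB : v ∉ B) (hB : B.card ≤ 4) :
    (K.faces.filter fun F => v ∈ F ∧ F ⊆ insert v B).card ≤ 3 := by
  by_contra hcon
  push_neg at hcon
  set L := K.faces.filter fun F => v ∈ F ∧ F ⊆ insert v B with hL
  have h4 : 4 ≤ L.card := hcon
  -- double counting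
  have count : 2 * L.card = ∑ x ∈ B, (L.filter fun F => x ∈ F).card := by
    have step : ∀ F ∈ L, (2 : ℕ) = ∑ x ∈ B, if x ∈ F then 1 else 0 := by
      intro F hF
      simp only [hL, Finset.mem_filter] at hF
      obtain ⟨hFf, hvF, hsub⟩ := hF
      have her : F.erase v ⊆ B := by
        intro z hz
        have hz' := Finset.mem_of_mem_erase hz
        have hzv := Finset.ne_of_mem_erase hz
        have := hsub hz'
        simp only [Finset.mem_insert] at this
        tauto
      have h1 : (F.erase v).card = 2 := by
        rw [Finset.card_erase_of_mem hvF, K.card_eq F hFf]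
      have h2 : B.filter (· ∈ F.erase v) = F.erase v := by
        apply Finset.Subset.antisymm
        · intro z hz; exact (Finset.mem_filter.mp hz).2
        · intro z hz; exact Finset.mem_filter.mpr ⟨her hz, hz⟩
      have h3 : ∀ x ∈ B, ((x ∈ F.erase v) ↔ (x ∈ F)) := by
        intro x hx
        simp only [Finset.mem_erase]
        have : x ≠ v := fun h => hvB (h ▸ hx)
        tauto
      calc (2 : ℕ) = (B.filter (· ∈ F.erase v)).card := by rw [h2, h1]
        _ = ∑ x ∈ B, if x ∈ F.erase v then 1 else 0 := Finset.card_filter _ _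
        _ = ∑ x ∈ B, if x ∈ F then 1 else 0 := by
            apply Finset.sum_congr rfl; intro x hx; simp [h3 x hx]
    calc 2 * L.card = ∑ _F ∈ L, 2 := by rw [Finset.sum_const, smul_eq_mul, mul_comm]
      _ = ∑ F ∈ L, ∑ x ∈ B, if x ∈ F then 1 else 0 := Finset.sum_congr rfl step
      _ = ∑ x ∈ B, ∑ F ∈ L, if x ∈ F then 1 else 0 := Finset.sum_comm
      _ = ∑ x ∈ B, (L.filter fun F => x ∈ F).card := by
          apply Finset.sum_congr rfl; intro x _; rw [Finset.card_filter]
  have hsubS : ∀ x, (L.filter fun F => x ∈ F) ⊆ K.faces.filter fun F => v ∈ F ∧ x ∈ F := by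
    intro x F hF
    simp only [hL, Finset.mem_filter] at hF ⊢
    tauto
  have hx2 : ∀ x ∈ B, (L.filter fun F => x ∈ F).card ≤ 2 := by
    intro x hx
    exact le_trans (Finset.card_le_card (hsubS x))
      (pair_le K hK (fun h => hvB (h ▸ hx)))
  have hsum8 : ∑ x ∈ B, (L.filter fun F => x ∈ F).card ≤ 8 := by
    calc ∑ x ∈ B, (L.filter fun F => x ∈ F).card ≤ ∑ _x ∈ B, 2 :=
        Finset.sum_le_sum hx2
      _ = B.card * 2 := by rw [Finset.sum_const, smul_eq_mul]
      _ ≤ 8 := by omega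
  have hL4 : L.card = 4 := by omega
  have hsum_eq : ∑ x ∈ B, (L.filter fun F => x ∈ F).card = 8 := by omega
  have hxeq : ∀ x ∈ B, (L.filter fun F => x ∈ F).card = 2 := by
    intro x hx
    by_contra hne
    have hlt : (L.filter fun F => x ∈ F).card < 2 :=
      lt_of_le_of_ne (hx2 x hx) hne
    have : ∑ y ∈ B, (L.filter fun F => y ∈ F).card < ∑ _y ∈ B, 2 :=
      Finset.sum_lt_sum hx2 ⟨x, hx, hlt⟩
    rw [Finset.sum_const, smul_eq_mul] at this
    omega
  have hall : ∀ x ∈ B, ∀ F ∈ K.faces, v ∈ F → x ∈ F → F ∈ L := by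
    intro x hx F hFf hvF hxF
    have heq : (L.filter fun F => x ∈ F) = K.faces.filter fun F => v ∈ F ∧ x ∈ F := by
      apply Finset.eq_of_subset_of_card_le (hsubS x)
      rw [hxeq x hx]
      exact pair_le K hK (fun h => hvB (h ▸ hx))
    have : F ∈ L.filter fun F => x ∈ F := by
      rw [heq]; exact Finset.mem_filter.mpr ⟨hFf, hvF, hxF⟩
    exact (Finset.mem_filter.mp this).1
  have hclose : ∀ x ∈ B, ∀ y, ({v, x, y} : Finset V) ∈ K.faces → y ∈ B := by
    intro x hx y hface
    have hyv : y ≠ v := by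
      intro h
      have h3 := K.card_eq _ hface
      rw [h] at h3
      have he : ({v, x, v} : Finset V) = {v, x} := by
        ext z; simp; tauto
      rw [he] at h3
      have := Finset.card_insert_le v ({x} : Finset V)
      simp at this
      omega
    have hmem : ({v, x, y} : Finset V) ∈ L :=
      hall x hx _ hface (by simp) (by simp)
    simp only [hL, Finset.mem_filter] at hmem
    have hy : y ∈ insert v B := hmem.2.2 (by simp)
    simp only [Finset.mem_insert] at hy
    tauto
  have hBn : ∀ x ∈ B, ({v, x} : Finset V) ∈ K.edges := by
    intro x hx
    have : (L.filter fun F => x ∈ F).Nonempty := by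
      rw [← Finset.card_pos, hxeq x hx]; omega
    obtain ⟨F, hF⟩ := this
    have hF' := hsubS x hF
    simp only [Finset.mem_filter] at hF'
    exact face_pair_edge K hF'.1 hF'.2.1 hF'.2.2 (fun h => hvB (h ▸ hx))
  have hBsub : B ⊆ (Finset.univ : Finset V).filter fun x => ({v, x} : Finset V) ∈ K.edges := by
    intro x hx
    exact Finset.mem_filter.mpr ⟨Finset.mem_univ x, hBn x hx⟩
  have hcard6 : ((Finset.univ : Finset V).filter fun x => ({v, x} : Finset V) ∈ K.edges).card = 6 := by
    rw [nbrs_card K v, hd v]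
  have hss : B ⊂ (Finset.univ : Finset V).filter fun x => ({v, x} : Finset V) ∈ K.edges := by
    rw [Finset.ssubset_def]
    refine ⟨hBsub, fun h => ?_⟩
    have h2 := Finset.card_le_card h
    rw [hcard6] at h2
    omega
  obtain ⟨w, hw, hwB⟩ := Finset.exists_of_ssubset hss
  have hBne : B.Nonempty := by
    rcases B.eq_empty_or_nonempty with h | h
    · rw [h] at hsum_eq; simp at hsum_eq
    · exact h
  obtain ⟨x0, hx0⟩ := hBne
  have hwe : ({v, w} : Finset V) ∈ K.edges := (Finset.mem_filter.mp hw).2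
  have hreach := hK.2.2 v x0 w (hBn x0 hx0) hwe
  have hreachB : ∀ z, Relation.ReflTransGen
      (fun x y => ({v, x, y} : Finset V) ∈ K.faces) x0 z → z ∈ B := by
    intro z h
    induction h with
    | refl => exact hx0
    | tail _ hbc ih => exact hclose _ ih _ hbc
  exact hwB (hreachB w hreach)

lemma triples_le (hK : K.IsClosedSurface) (hd : ∀ v : V, K.degree v = 6)
    (A : Finset V) (hA : A.card = 5) :
    (K.faces.filter fun F => F ⊆ A).card ≤ 5 := by
  set T := K.faces.filter fun F => F ⊆ A with hT
  have step : ∀ F ∈ T, (3 : ℕ) = ∑ x ∈ A, if x ∈ F then 1 else 0 := by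
    intro F hF
    simp only [hT, Finset.mem_filter] at hF
    have h1 : A.filter (· ∈ F) = F := by
      apply Finset.Subset.antisymm
      · intro z hz; exact (Finset.mem_filter.mp hz).2
      · intro z hz; exact Finset.mem_filter.mpr ⟨hF.2 hz, hz⟩
    calc (3 : ℕ) = F.card := (K.card_eq F hF.1).symm
      _ = (A.filter (· ∈ F)).card := by rw [h1]
      _ = ∑ x ∈ A, if x ∈ F then 1 else 0 := Finset.card_filter _ _
  have hcount : 3 * T.card = ∑ x ∈ A, (T.filter fun F => x ∈ F).card := by
    calc 3 * T.card = ∑ _F ∈ T, 3 := by rw [Finset.sum_const, smul_eq_mul, mul_comm]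
      _ = ∑ F ∈ T, ∑ x ∈ A, if x ∈ F then 1 else 0 := Finset.sum_congr rfl step
      _ = ∑ x ∈ A, ∑ F ∈ T, if x ∈ F then 1 else 0 := Finset.sum_comm
      _ = ∑ x ∈ A, (T.filter fun F => x ∈ F).card := by
          apply Finset.sum_congr rfl; intro x _; rw [Finset.card_filter]
  have hxb : ∀ x ∈ A, (T.filter fun F => x ∈ F).card ≤ 3 := by
    intro x hx
    have hsub : (T.filter fun F => x ∈ F)
        ⊆ K.faces.filter fun F => x ∈ F ∧ F ⊆ insert x (A.erase x) := by
      intro F hF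
      simp only [hT, Finset.mem_filter] at hF ⊢
      refine ⟨hF.1.1, hF.2, ?_⟩
      rw [Finset.insert_erase hx]
      exact hF.1.2
    refine le_trans (Finset.card_le_card hsub) ?_
    apply link_bound K hK hd x (A.erase x) (Finset.notMem_erase x A)
    rw [Finset.card_erase_of_mem hx, hA]
  have : 3 * T.card ≤ 15 := by
    calc 3 * T.card = ∑ x ∈ A, (T.filter fun F => x ∈ F).card := hcount
      _ ≤ ∑ _x ∈ A, 3 := Finset.sum_le_sum hxb
      _ = 15 := by rw [Finset.sum_const, smul_eq_mul, hA]
  omega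

end Aux

/-- In a combinatorial 2-manifold with all vertex degrees `6`, the union of the stars of
three distinct vertices contains at least `12` faces, and the union of the stars of
five distinct vertices contains strictly more than `12` faces. -/

theorem faces_in_star_unions {V : Type} [DecidableEq V] [Fintype V]
    (K : SComplex V) (hK : K.IsClosedSurface) (hd : ∀ v : V, K.degree v = 6)
    (a : Fin 5 → V) (ha : Function.Injective a) :
    12 ≤ (K.faces.filter fun F => a 0 ∈ F ∨ a 1 ∈ F ∨ a 2 ∈ F).card ∧
    12 < (K.faces.filter fun F => ∃ j : Fin 5, a j ∈ F).card := by
  constructor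
  · -- first part: inclusion-exclusion for three stars
    set X := K.faces.filter fun F => a 0 ∈ F with hXdef
    set Y := K.faces.filter fun F => a 1 ∈ F with hYdef
    set Z := K.faces.filter fun F => a 2 ∈ F with hZdef
    have hXc : X.card = 6 := star_card K hK hd _
    have hYc : Y.card = 6 := star_card K hK hd _
    have hZc : Z.card = 6 := star_card K hK hd _
    have hpair : ∀ i j : Fin 5, i ≠ j →
        ((K.faces.filter fun F => a i ∈ F) ∩ K.faces.filter fun F => a j ∈ F).card ≤ 2 := by
      intro i j hij
      rw [← Finset.filter_and]
      exact pair_le K hK (fun h => hij (ha h))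
    have hXY : (X ∩ Y).card ≤ 2 := hpair 0 1 (by decide)
    have hXZ : (X ∩ Z).card ≤ 2 := hpair 0 2 (by decide)
    have hYZ : (Y ∩ Z).card ≤ 2 := hpair 1 2 (by decide)
    have hunion : (K.faces.filter fun F => a 0 ∈ F ∨ a 1 ∈ F ∨ a 2 ∈ F) = X ∪ Y ∪ Z := by
      rw [Finset.filter_or, Finset.filter_or, Finset.union_assoc]
    rw [hunion]
    have h1 := Finset.card_union_add_card_inter (X ∪ Y) Z
    have h2 := Finset.card_union_add_card_inter X Y
    have h3 : ((X ∪ Y) ∩ Z).card ≤ (X ∩ Z).card + (Y ∩ Z).card := by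
      rw [Finset.union_inter_distrib_right]
      exact Finset.card_union_le _ _
    omega
  · -- second part
    set A := Finset.univ.image a with hAdef
    have hA : A.card = 5 := by
      rw [hAdef, Finset.card_image_of_injective _ ha, Finset.card_univ, Fintype.card_fin]
    set U := K.faces.filter fun F => ∃ j : Fin 5, a j ∈ F with hU
    have hsum30 : ∑ j : Fin 5, (K.faces.filter fun F => a j ∈ F).card = 30 := by
      rw [Finset.sum_congr rfl (fun j _ => star_card K hK hd (a j))]
      simp
    have hswap : ∑ j : Fin 5, (K.faces.filter fun F => a j ∈ F).card
        = ∑ F ∈ K.faces, ((Finset.univ : Finset (Fin 5)).filter fun j => a j ∈ F).card := by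
      simp_rw [Finset.card_filter]
      rw [Finset.sum_comm]
    have hrestrict : ∑ F ∈ K.faces, ((Finset.univ : Finset (Fin 5)).filter fun j => a j ∈ F).card
        = ∑ F ∈ U, ((Finset.univ : Finset (Fin 5)).filter fun j => a j ∈ F).card := by
      rw [hU]
      rw [Finset.sum_filter_of_ne]
      intro F _ hne
      have : ((Finset.univ : Finset (Fin 5)).filter fun j => a j ∈ F).Nonempty :=
        Finset.card_pos.mp (Nat.pos_of_ne_zero hne)
      obtain ⟨j, hj⟩ := this
      exact ⟨j, (Finset.mem_filter.mp hj).2⟩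
    have hbound : ∀ F ∈ U, ((Finset.univ : Finset (Fin 5)).filter fun j => a j ∈ F).card
        ≤ 2 + if F ⊆ A then 1 else 0 := by
      intro F hF
      simp only [hU, Finset.mem_filter] at hF
      have himg : ((Finset.univ : Finset (Fin 5)).filter fun j => a j ∈ F).card
          = (A.filter fun x => x ∈ F).card := by
        rw [← Finset.card_image_of_injective _ ha, hAdef, Finset.filter_image]
      rw [himg]
      have hsubF : (A.filter fun x => x ∈ F) ⊆ F := by
        intro z hz; exact (Finset.mem_filter.mp hz).2
      split_ifs with h
      · have := Finset.card_le_card hsubF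
        rw [K.card_eq F hF.1] at this
        omega
      · have hss : (A.filter fun x => x ∈ F) ⊂ F := by
          rw [Finset.ssubset_iff_of_subset hsubF]
          obtain ⟨y, hyF, hyA⟩ := Finset.not_subset.mp h
          exact ⟨y, hyF, fun hc => hyA (Finset.mem_filter.mp hc).1⟩
        have := Finset.card_lt_card hss
        rw [K.card_eq F hF.1] at this
        omega
    have hT : (U.filter fun F => F ⊆ A).card ≤ 5 := by
      refine le_trans (Finset.card_le_card ?_) (triples_le K hK hd A hA)
      intro F hF
      simp only [hU, Finset.mem_filter] at hF ⊢
      exact ⟨hF.1.1, hF.2⟩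
    have hsplit : ∑ F ∈ U, ((Finset.univ : Finset (Fin 5)).filter fun j => a j ∈ F).card
        ≤ 2 * U.card + (U.filter fun F => F ⊆ A).card := by
      calc ∑ F ∈ U, ((Finset.univ : Finset (Fin 5)).filter fun j => a j ∈ F).card
          ≤ ∑ F ∈ U, (2 + if F ⊆ A then 1 else 0) := Finset.sum_le_sum hbound
        _ = ∑ _F ∈ U, 2 + ∑ F ∈ U, (if F ⊆ A then 1 else 0) := Finset.sum_add_distrib
        _ = 2 * U.card + (U.filter fun F => F ⊆ A).card := by
            rw [Finset.sum_const, smul_eq_mul, mul_comm]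
            congr 1
            exact (Finset.card_filter _ _).symm
    omega
end
end

section
/- Let M be an n-vertex connected combinatorial 2-manifold with every vertex of degree 6 and n > 7. Then for any vertex u there exist faces uab and vab of M such that uv is not an edge of M. -/
open scoped Classical
noncomputable section

/-!
The link of `u` is a hexagon `c : ZMod 6 → V`: a walk around the link can only close up at its
starting vertex, since every edge lies in exactly two faces. Suppose that for every link edge `c i c (i+1)`
the apex of the second face over it is adjacent to `u`, i.e. equals some `c j`. Then
`j ∈ {i + 3, i + 4}`, and the offset `j - i` is the same for all `i`, because every other
configuration closes up a link of fewer than six vertices around `c i` or `c (i+1)`. With a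
constant offset every two of the `c i` span an edge, so the closed star of `u` is a connected
component with seven vertices.
-/

theorem ZMod.forall_or_forall_not_of_imp_add_one {n : ℕ} [NeZero n] {p : ZMod n → Prop}
    (h : ∀ i, p i → p (i + 1)) : (∀ i, p i) ∨ ∀ i, ¬ p i := by
  have hk (i : ZMod n) (k : ℕ) (hi : p i) : p (i + k) := by
    induction k with
    | zero => simpa using hi
    | succ k ih => simpa [add_assoc] using h _ ih
  have hij (i j : ZMod n) (hi : p i) : p j := by simpa using hk i (j - i).val hi
  by_cases h0 : p 0
  · exact Or.inl fun j => hij 0 j h0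
  · exact Or.inr fun i hi => h0 (hij i 0 hi)

namespace SComplex

open Finset Function

variable {V : Type} [DecidableEq V] [Fintype V] {K : SComplex V}

def neighborFinset (K : SComplex V) (v : V) : Finset V := univ.filter fun x => {v, x} ∈ K.edges

@[simp]
lemma mem_neighborFinset {v x : V} : x ∈ K.neighborFinset v ↔ {v, x} ∈ K.edges := by
  simp [neighborFinset]

lemma card_neighborFinset (v : V) : #(K.neighborFinset v) = K.degree v := by
  have hinj : Injective fun x : V => ({v, x} : Finset V) := by
    intro x y (hxy : ({v, x} : Finset V) = {v, y})
    have hx : x ∈ ({v, y} : Finset V) := hxy ▸ mem_insert_of_mem (mem_singleton_self x)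
    have hy : y ∈ ({v, x} : Finset V) := hxy ▸ mem_insert_of_mem (mem_singleton_self y)
    simp only [mem_insert, mem_singleton] at hx hy
    grind
  rw [degree, ← card_image_of_injective _ hinj]
  congr 1
  ext e
  simp only [mem_image, mem_neighborFinset, mem_filter]
  constructor
  · rintro ⟨x, hx, rfl⟩
    exact ⟨hx, mem_insert_self v {x}⟩
  · rintro ⟨he, hve⟩
    obtain ⟨x, y, -, rfl⟩ := card_eq_two.1 (mem_filter.1 he).2.1
    rcases mem_insert.1 hve with rfl | hvy
    · exact ⟨y, he, rfl⟩
    · rw [mem_singleton.1 hvy, pair_comm] at *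
      exact ⟨x, he, rfl⟩

lemma ne_of_mem_faces {a b c : V} (h : {a, b, c} ∈ K.faces) : a ≠ b ∧ a ≠ c ∧ b ≠ c := by
  have h3 := K.card_eq _ h
  refine ⟨?_, ?_, ?_⟩ <;> rintro rfl <;>
    simp only [mem_insert, mem_singleton, true_or, or_true, insert_eq_of_mem] at h3 <;>
    exact absurd h3 (card_le_two.trans_lt (by norm_num)).ne

lemma ne_of_mem_edges {a b : V} (h : {a, b} ∈ K.edges) : a ≠ b := by
  rintro rfl
  simp [edges] at h

lemma pair_mem_edges {F : Finset V} (hF : F ∈ K.faces) {x y : V} (hx : x ∈ F) (hy : y ∈ F)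
    (hxy : x ≠ y) : {x, y} ∈ K.edges := by
  simp only [edges, mem_filter, mem_univ, true_and]
  exact ⟨card_pair hxy, F, hF, insert_subset hx (singleton_subset_iff.2 hy)⟩

lemma mem_faces_swap {a b c : V} (h : {a, b, c} ∈ K.faces) : {b, a, c} ∈ K.faces := by
  rwa [insert_comm]

lemma mem_faces_rotate {a b c : V} (h : {a, b, c} ∈ K.faces) : {b, c, a} ∈ K.faces := by
  rwa [insert_comm, pair_comm a c] at h

lemma mem_neighborFinset_of_mem_faces {v a b : V} (h : {v, a, b} ∈ K.faces) :
    a ∈ K.neighborFinset v :=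
  mem_neighborFinset.2 (pair_mem_edges h (by simp) (by simp) (ne_of_mem_faces h).1)

lemma exists_eq_of_pair_subset {F : Finset V} (hF : F ∈ K.faces) {a b : V} (hab : a ≠ b)
    (h : {a, b} ⊆ F) : ∃ c, F = {a, b, c} := by
  obtain ⟨c, hc⟩ := card_eq_one.1 (show #(F \ {a, b}) = 1 by
    rw [card_sdiff_of_subset h, K.card_eq F hF, card_pair hab])
  refine ⟨c, ?_⟩
  rw [← sdiff_union_of_subset h, hc]
  ext
  simp only [mem_union, mem_insert, mem_singleton]
  tauto

lemma exists_face_of_mem_edges {a b : V} (h : {a, b} ∈ K.edges) : ∃ c, {a, b, c} ∈ K.faces := by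
  have hab := ne_of_mem_edges h
  simp only [edges, mem_filter, mem_univ, true_and] at h
  obtain ⟨-, F, hF, hsub⟩ := h
  obtain ⟨c, rfl⟩ := exists_eq_of_pair_subset hF hab hsub
  exact ⟨c, hF⟩

lemma Connected.eq_univ_of_closed (hc : K.Connected) {S : Finset V} {u : V} (hu : u ∈ S)
    (hS : ∀ x ∈ S, ∀ y, {x, y} ∈ K.edges → y ∈ S) : S = univ := by
  refine eq_univ_of_forall fun v => ?_
  induction hc u v with
  | refl => exact hu
  | tail _ hxy ih => exact hS _ ih _ hxy

lemma link_walk_face_val {v : V} {w : ℕ → V} (hf : ∀ k, {v, w k, w (k + 1)} ∈ K.faces)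
    {m : ℕ} [NeZero m] (hret : w m = w 0) (i : ZMod m) :
    {v, w i.val, w (i + 1).val} ∈ K.faces := by
  have hval : (i + 1).val = (i.val + 1) % m := by
    rw [← ZMod.val_natCast, Nat.cast_add, ZMod.natCast_zmod_val, Nat.cast_one]
  rcases (show i.val + 1 ≤ m from ZMod.val_lt i).lt_or_eq with hlt | heq
  · rw [hval, Nat.mod_eq_of_lt hlt]
    exact hf _
  · rw [hval, heq, Nat.mod_self, ← hret]
    simpa only [heq] using hf i.val

section ClosedSurface

variable (hK : K.IsClosedSurface)
include hK

lemma eq_or_eq_of_mem_faces {a b p q y : V} (hp : {a, b, p} ∈ K.faces)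
    (hq : {a, b, q} ∈ K.faces) (hpq : p ≠ q) (hy : {a, b, y} ∈ K.faces) : y = p ∨ y = q := by
  by_contra! hne
  have hsub (x : V) : ({a, b} : Finset V) ⊆ {a, b, x} := insert_subset_insert a (by simp)
  have third_ne {x z : V} (hx : {a, b, x} ∈ K.faces) (hxz : x ≠ z) :
      ({a, b, x} : Finset V) ≠ {a, b, z} := by
    intro heq
    have hmem : x ∈ ({a, b, z} : Finset V) := heq ▸ by simp
    have := ne_of_mem_faces hx
    simp only [mem_insert, mem_singleton] at hmem
    grind
  have h2 := hK.2.1 _ (pair_mem_edges hp (by simp) (by simp) (ne_of_mem_faces hp).1)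
  have h3 : 2 < #(K.faces.filter fun F => {a, b} ⊆ F) := two_lt_card.2
    ⟨_, mem_filter.2 ⟨hp, hsub p⟩, _, mem_filter.2 ⟨hq, hsub q⟩, _, mem_filter.2 ⟨hy, hsub y⟩,
      third_ne hp hpq, third_ne hp hne.1.symm, third_ne hq hne.2.symm⟩
  omega

lemma exists_other_face {a b c : V} (h : {a, b, c} ∈ K.faces) :
    ∃ d, d ≠ c ∧ {a, b, d} ∈ K.faces := by
  have hab := (ne_of_mem_faces h).1
  have h2 := hK.2.1 _ (pair_mem_edges h (by simp) (by simp) hab)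
  obtain ⟨G, hG, hGne⟩ :=
    exists_mem_ne (s := K.faces.filter fun F => {a, b} ⊆ F) (by omega) {a, b, c}
  rw [mem_filter] at hG
  obtain ⟨d, rfl⟩ := exists_eq_of_pair_subset hG.1 hab hG.2
  exact ⟨d, by rintro rfl; exact hGne rfl, hG.1⟩

lemma neighborFinset_subset_of_closed {v a : V} {T : Finset V}
    (hcl : ∀ x ∈ T, ∀ y, {v, x, y} ∈ K.faces → y ∈ T) (ha : a ∈ T) (hva : {v, a} ∈ K.edges) :
    K.neighborFinset v ⊆ T := by
  intro b hb
  have hab := hK.2.2 v a b hva (mem_neighborFinset.1 hb)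
  clear hb
  induction hab with
  | refl => exact ha
  | tail _ hxy ih => exact hcl _ ih _ hxy

lemma neighborFinset_subset_of_link_cycle {v : V} {m : ℕ} [NeZero m] (c : ZMod m → V)
    (hf : ∀ i, {v, c i, c (i + 1)} ∈ K.faces) (hne : ∀ i, c (i - 1) ≠ c (i + 1)) :
    K.neighborFinset v ⊆ univ.image c := by
  refine neighborFinset_subset_of_closed hK ?_ (mem_image_of_mem c (mem_univ 0))
    (mem_neighborFinset.1 (mem_neighborFinset_of_mem_faces (hf 0)))
  simp only [mem_image, mem_univ, true_and]
  rintro _ ⟨i, rfl⟩ y hy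
  have hprev : {v, c i, c (i - 1)} ∈ K.faces := by simpa [pair_comm] using hf (i - 1)
  rcases eq_or_eq_of_mem_faces hK (hf i) hprev (hne i).symm hy with rfl | rfl
  exacts [⟨_, rfl⟩, ⟨_, rfl⟩]

lemma card_neighborFinset_le_three {v a b c : V} (h₁ : {v, a, b} ∈ K.faces)
    (h₂ : {v, b, c} ∈ K.faces) (h₃ : {v, c, a} ∈ K.faces) : #(K.neighborFinset v) ≤ 3 := by
  have hsub := neighborFinset_subset_of_link_cycle hK (m := 3) ![a, b, c]
    (by intro i; fin_cases i; exacts [h₁, h₂, h₃])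
    (by
      intro i; fin_cases i
      exacts [(ne_of_mem_faces h₂).2.2.symm, (ne_of_mem_faces h₃).2.2.symm,
        (ne_of_mem_faces h₁).2.2.symm])
  exact (card_le_card hsub).trans (card_image_le.trans (by simp))

lemma card_neighborFinset_le_four {v a b c d : V} (h₁ : {v, a, b} ∈ K.faces)
    (h₂ : {v, b, c} ∈ K.faces) (h₃ : {v, c, d} ∈ K.faces) (h₄ : {v, d, a} ∈ K.faces)
    (hac : a ≠ c) (hbd : b ≠ d) : #(K.neighborFinset v) ≤ 4 := by
  have hsub := neighborFinset_subset_of_link_cycle hK (m := 4) ![a, b, c, d]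
    (by intro i; fin_cases i; exacts [h₁, h₂, h₃, h₄])
    (by intro i; fin_cases i; exacts [hbd.symm, hac, hbd, hac.symm])
  exact (card_le_card hsub).trans (card_image_le.trans (by simp))

lemma exists_link_walk {v a b : V} (h : {v, a, b} ∈ K.faces) :
    ∃ w : ℕ → V, (∀ k, {v, w k, w (k + 1)} ∈ K.faces) ∧ ∀ k, w (k + 2) ≠ w k := by
  have step : ∀ p : V × V, ∃ q : V × V,
      {v, p.1, p.2} ∈ K.faces → q.1 = p.2 ∧ q.2 ≠ p.1 ∧ {v, q.1, q.2} ∈ K.faces := by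
    rintro ⟨x, y⟩
    by_cases hxy : {v, x, y} ∈ K.faces
    · obtain ⟨z, hzx, hz⟩ := exists_other_face hK (show {v, y, x} ∈ K.faces by rwa [pair_comm])
      exact ⟨(y, z), fun _ => ⟨rfl, hzx, hz⟩⟩
    · exact ⟨(x, y), fun h => (hxy h).elim⟩
  choose g hg using step
  let s : ℕ → V × V := fun k => g^[k] (a, b)
  have hs_succ (k : ℕ) : s (k + 1) = g (s k) := iterate_succ_apply' g k (a, b)
  have hs (k : ℕ) : {v, (s k).1, (s k).2} ∈ K.faces := by
    induction k with
    | zero => exact h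
    | succ k ih => rw [hs_succ]; exact (hg _ ih).2.2
  have hs_fst (k : ℕ) : (s (k + 1)).1 = (s k).2 := by rw [hs_succ, (hg _ (hs k)).1]
  refine ⟨fun k => (s k).1, fun k => ?_, fun k => ?_⟩
  · simpa only [hs_fst] using hs k
  · show (s (k + 1 + 1)).1 ≠ (s k).1
    rw [hs_fst, hs_succ]
    exact (hg _ (hs k)).2.1

section LinkWalk

variable {v : V} {w : ℕ → V} (hf : ∀ k, {v, w k, w (k + 1)} ∈ K.faces)
  (hb : ∀ k, w (k + 2) ≠ w k)
include hf hb

lemma link_walk_return_eq_zero {m j : ℕ} (hinj : Set.InjOn w (Set.Iio m)) (hj : j < m)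
    (hret : w m = w j) : j = 0 := by
  obtain _ | j := j
  · rfl
  exfalso
  obtain ⟨n, rfl⟩ : ∃ n, m = n + 1 := ⟨m - 1, by omega⟩
  rcases (show n = j + 1 ∨ n = j + 2 ∨ j + 3 ≤ n by omega) with rfl | rfl | hn
  · exact (ne_of_mem_faces (hf (j + 1))).2.2 hret.symm
  · exact hb (j + 1) hret
  -- otherwise the edge `v w (j+1)` lies in three faces, with apexes `w j`, `w (j+2)`, `w n`
  · have hprev : {v, w (j + 1), w j} ∈ K.faces := by simpa [pair_comm] using hf j
    have hlast : {v, w (j + 1), w n} ∈ K.faces := by simpa [pair_comm, hret] using hf n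
    rcases eq_or_eq_of_mem_faces hK hprev (hf (j + 1)) (hb j).symm hlast with h | h <;>
      have := hinj (Set.mem_Iio.2 (by omega)) (Set.mem_Iio.2 (by omega)) h <;> omega

lemma neighborFinset_subset_of_closed_link_walk {m : ℕ} (hinj : Set.InjOn w (Set.Iio m))
    (hm : 0 < m) (hret : w m = w 0) : K.neighborFinset v ⊆ (range m).image w := by
  have hm3 : 3 ≤ m := by
    rcases (show m = 1 ∨ m = 2 ∨ 3 ≤ m by omega) with rfl | rfl | h
    · exact absurd hret.symm (ne_of_mem_faces (hf 0)).2.2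
    · exact absurd hret (hb 0)
    · exact h
  have : NeZero m := ⟨hm.ne'⟩
  have hne (i : ZMod m) : w (i - 1).val ≠ w (i + 1).val := by
    intro h
    have h2 : ((2 : ℕ) : ZMod m) = 0 := by
      have := ZMod.val_injective m (hinj (ZMod.val_lt _) (ZMod.val_lt _) h)
      push_cast
      linear_combination -this
    have := Nat.le_of_dvd (by norm_num) ((ZMod.natCast_eq_zero_iff _ _).1 h2)
    omega
  refine (neighborFinset_subset_of_link_cycle hK (fun i : ZMod m => w i.val)
    (link_walk_face_val hf hret) hne).trans ?_
  rintro _ hx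
  obtain ⟨i, -, rfl⟩ := mem_image.1 hx
  exact mem_image_of_mem w (mem_range.2 (ZMod.val_lt i))

end LinkWalk

lemma exists_closed_link_walk (v : V) (hpos : 0 < #(K.neighborFinset v)) :
    ∃ w : ℕ → V, (∀ k, {v, w k, w (k + 1)} ∈ K.faces) ∧
      Set.InjOn w (Set.Iio #(K.neighborFinset v)) ∧ w #(K.neighborFinset v) = w 0 := by
  obtain ⟨a, ha⟩ := card_pos.1 hpos
  obtain ⟨b, hab⟩ := exists_face_of_mem_edges (mem_neighborFinset.1 ha)
  obtain ⟨w, hf, hb⟩ := exists_link_walk hK hab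
  have hw (k : ℕ) : w k ∈ K.neighborFinset v := mem_neighborFinset_of_mem_faces (hf k)
  have hex : ∃ m, ∃ j < m, w m = w j := by
    obtain ⟨i, -, j, -, hij, heq⟩ := exists_ne_map_eq_of_card_lt_of_maps_to
      (s := range (#(K.neighborFinset v) + 1)) (by simp) (fun k _ => hw k)
    rcases lt_or_gt_of_ne hij with h | h
    exacts [⟨j, i, h, heq.symm⟩, ⟨i, j, h, heq⟩]
  obtain ⟨j, hjm, hret⟩ := Nat.find_spec hex
  have hinj : Set.InjOn w (Set.Iio (Nat.find hex)) := by
    intro i hi j hj hij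
    by_contra hne
    rcases lt_or_gt_of_ne hne with h | h
    · exact Nat.find_min hex hj ⟨i, h, hij.symm⟩
    · exact Nat.find_min hex hi ⟨j, h, hij⟩
  obtain rfl := link_walk_return_eq_zero hK hf hb hinj hjm hret
  have hle := card_le_card (neighborFinset_subset_of_closed_link_walk hK hf hb hinj hjm hret)
  have hge := card_le_card (show (range (Nat.find hex)).image w ⊆ K.neighborFinset v by
    intro x hx
    obtain ⟨k, -, rfl⟩ := mem_image.1 hx
    exact hw k)
  rw [card_image_of_injOn (by rwa [coe_range]), card_range] at hle hge
  rw [← le_antisymm hge hle]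
  exact ⟨w, hf, hinj, hret⟩

theorem exists_link_cycle (v : V) {d : ℕ} [NeZero d] (hd : #(K.neighborFinset v) = d) :
    ∃ c : ZMod d → V, Injective c ∧ (∀ i, {v, c i, c (i + 1)} ∈ K.faces) ∧
      univ.image c = K.neighborFinset v := by
  subst hd
  obtain ⟨w, hf, hinj, hret⟩ := exists_closed_link_walk hK v (Nat.pos_of_ne_zero (NeZero.ne _))
  have hc : Injective fun i : ZMod #(K.neighborFinset v) => w i.val := fun i j h =>
    ZMod.val_injective _ (hinj (ZMod.val_lt i) (ZMod.val_lt j) h)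
  refine ⟨_, hc, link_walk_face_val hf hret, eq_of_subset_of_card_le ?_ ?_⟩
  · intro x hx
    obtain ⟨i, -, rfl⟩ := mem_image.1 hx
    exact mem_neighborFinset_of_mem_faces (hf i.val)
  · rw [card_image_of_injective _ hc, card_univ, ZMod.card]

end ClosedSurface

def OppositeVerticesAdjacent (K : SComplex V) (u : V) : Prop :=
  ∀ a b x, {u, a, b} ∈ K.faces → {x, a, b} ∈ K.faces → u ≠ x → {u, x} ∈ K.edges

lemma pair_mem_edges_of_uniform_apex {c : ZMod 6 → V} (hc : Injective c) {s : ZMod 6}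
    (hs : s = 3 ∨ s = 4) (hfs : ∀ i, {c i, c (i + 1), c (i + s)} ∈ K.faces) {i j : ZMod 6}
    (hij : i ≠ j) : {c i, c j} ∈ K.edges := by
  obtain ⟨k, hik, hjk⟩ :
      ∃ k, (i = k ∨ i = k + 1 ∨ i = k + s) ∧ (j = k ∨ j = k + 1 ∨ j = k + s) := by
    revert i j
    rcases hs with rfl | rfl <;> decide
  have mem (l : ZMod 6) (hl : l = k ∨ l = k + 1 ∨ l = k + s) :
      c l ∈ ({c k, c (k + 1), c (k + s)} : Finset V) := by
    rcases hl with rfl | rfl | rfl <;> simp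
  exact pair_mem_edges (hfs k) (mem i hik) (mem j hjk) (hc.ne hij)

section LinkHexagon

variable (hK : K.IsClosedSurface) (h6 : ∀ v, #(K.neighborFinset v) = 6) {u : V}
  {c : ZMod 6 → V} (hcf : ∀ i, {u, c i, c (i + 1)} ∈ K.faces)
include hK h6 hcf

lemma exists_apex (himg : univ.image c = K.neighborFinset u) (H : K.OppositeVerticesAdjacent u)
    (i : ZMod 6) : ∃ j, (j = i + 3 ∨ j = i + 4) ∧ {c i, c (i + 1), c j} ∈ K.faces := by
  obtain ⟨y, hyu, hy⟩ := exists_other_face hK (mem_faces_rotate (hcf i))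
  have hyN : y ∈ K.neighborFinset u :=
    mem_neighborFinset.2 (H _ _ _ (hcf i) (mem_faces_rotate (mem_faces_rotate hy)) hyu.symm)
  rw [← himg] at hyN
  obtain ⟨j, -, rfl⟩ := mem_image.1 hyN
  refine ⟨j, ?_, hy⟩
  have hj0 : j ≠ i := fun h => (ne_of_mem_faces hy).2.1 (congrArg c h).symm
  have hj1 : j ≠ i + 1 := fun h => (ne_of_mem_faces hy).2.2 (congrArg c h).symm
  -- `j = i + 2` and `j = i - 1` make the links of `c (i + 1)` and `c i` triangles
  have hj2 : j ≠ i + 2 := by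
    rintro rfl
    have hnext := hcf (i + 1)
    rw [show i + 1 + 1 = i + 2 by ring] at hnext
    have := card_neighborFinset_le_three hK (mem_faces_rotate (mem_faces_rotate (hcf i)))
      (mem_faces_swap hy) (mem_faces_rotate hnext)
    rw [h6] at this
    omega
  have hj5 : j ≠ i - 1 := by
    rintro rfl
    have hprev := hcf (i - 1)
    rw [sub_add_cancel] at hprev
    have := card_neighborFinset_le_three hK (mem_faces_swap (hcf i)) hy
      (mem_faces_rotate (mem_faces_rotate (mem_faces_swap hprev)))
    rw [h6] at this
    omega
  have key : ∀ i j : ZMod 6, j ≠ i → j ≠ i + 1 → j ≠ i + 2 → j ≠ i - 1 →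
      j = i + 3 ∨ j = i + 4 := by decide
  exact key i j hj0 hj1 hj2 hj5

lemma apex_add_one_ne (hc : Injective c) (i : ZMod 6)
    (h₁ : {c i, c (i + 1), c (i + 4)} ∈ K.faces) :
    {c (i + 1), c (i + 2), c (i + 4)} ∉ K.faces := by
  intro h₂
  have hnext := hcf (i + 1)
  rw [show i + 1 + 1 = i + 2 by ring] at hnext
  have hi2 : c i ≠ c (i + 2) := hc.ne (by
    have key : ∀ i : ZMod 6, i ≠ i + 2 := by decide
    exact key i)
  have := card_neighborFinset_le_four hK (mem_faces_swap (mem_faces_rotate (hcf i)))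
    (mem_faces_swap hnext) h₂ (mem_faces_rotate h₁) hi2 (ne_of_mem_faces (hcf (i + 4))).1
  rw [h6] at this
  omega

lemma exists_uniform_apex (hc : Injective c) (himg : univ.image c = K.neighborFinset u)
    (H : K.OppositeVerticesAdjacent u) :
    ∃ s : ZMod 6, (s = 3 ∨ s = 4) ∧ ∀ i, {c i, c (i + 1), c (i + s)} ∈ K.faces := by
  choose a ha hfa using exists_apex hK h6 hcf himg H
  have hstep (i : ZMod 6) (hi : a i = i + 4) : a (i + 1) = i + 1 + 4 := by
    refine (ha (i + 1)).resolve_left fun h => apex_add_one_ne hK h6 hcf hc i (hi ▸ hfa i) ?_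
    have := hfa (i + 1)
    rwa [h, show i + 1 + 1 = i + 2 by ring, show i + 1 + 3 = i + 4 by ring] at this
  rcases ZMod.forall_or_forall_not_of_imp_add_one hstep with h | h
  · exact ⟨4, Or.inr rfl, fun i => h i ▸ hfa i⟩
  · exact ⟨3, Or.inl rfl, fun i => (ha i).resolve_right (h i) ▸ hfa i⟩

end LinkHexagon

lemma insert_neighborFinset_closed (hK : K.IsClosedSurface) (h6 : ∀ v, #(K.neighborFinset v) = 6)
    {u x y : V} (H : K.OppositeVerticesAdjacent u) (hx : x ∈ insert u (K.neighborFinset u))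
    (hxy : {x, y} ∈ K.edges) : y ∈ insert u (K.neighborFinset u) := by
  obtain ⟨c, hc, hcf, himg⟩ := exists_link_cycle hK u (h6 u)
  obtain ⟨s, hs, hfs⟩ := exists_uniform_apex hK h6 hcf hc himg H
  rcases mem_insert.1 hx with rfl | hx
  · exact mem_insert_of_mem (mem_neighborFinset.2 hxy)
  have hu : u ∉ K.neighborFinset u := fun h => ne_of_mem_edges (mem_neighborFinset.1 h) rfl
  rw [← himg] at hx hu ⊢
  obtain ⟨i, -, rfl⟩ := mem_image.1 hx
  have hsub : (insert u (univ.image c)).erase (c i) ⊆ K.neighborFinset (c i) := by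
    intro z hz
    rw [mem_erase, mem_insert, mem_image] at hz
    obtain ⟨hzi, rfl | ⟨j, -, rfl⟩⟩ := hz
    · exact mem_neighborFinset_of_mem_faces (mem_faces_swap (hcf i))
    · exact mem_neighborFinset.2
        (pair_mem_edges_of_uniform_apex hc hs hfs fun h => hzi (congrArg c h).symm)
  have hcard : #(K.neighborFinset (c i)) ≤ #((insert u (univ.image c)).erase (c i)) := by
    rw [card_erase_of_mem (mem_insert_of_mem (mem_image_of_mem c (mem_univ i))),
      card_insert_of_notMem hu, himg, h6, h6]
  exact mem_of_mem_erase (eq_of_subset_of_card_le hsub hcard ▸ mem_neighborFinset.2 hxy)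

end SComplex

/-- In a connected combinatorial 2-manifold on more than `7` vertices with all vertex
degrees `6`, for any vertex `u` there are faces `uab` and `vab` with `uv` a non-edge. -/
theorem exists_opposite_faces {V : Type} [DecidableEq V] [Fintype V]
    (K : SComplex V) (hK : K.IsClosedSurface) (hc : K.Connected)
    (hd : ∀ v : V, K.degree v = 6) (hn : 7 < Fintype.card V) (u : V) :
    ∃ a b v : V, ({u, a, b} : Finset V) ∈ K.faces ∧ ({v, a, b} : Finset V) ∈ K.faces ∧
      u ≠ v ∧ ({u, v} : Finset V) ∉ K.edges := by
  by_contra! H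
  have h6 (v : V) : (K.neighborFinset v).card = 6 :=
    (SComplex.card_neighborFinset v).trans (hd v)
  have hstar := hc.eq_univ_of_closed (Finset.mem_insert_self u (K.neighborFinset u))
    fun x hx y hxy => SComplex.insert_neighborFinset_closed hK h6 H hx hxy
  have := Finset.card_insert_le u (K.neighborFinset u)
  rw [hstar, Finset.card_univ, h6] at this
  omega
end
end
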